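/- arXiv:1311.7167 — 10 statements merged into one kernel-verified Lean document; each statement's English description precedes it below -/
import Mathlib

section
/- Let n ≥ 1 and let T : ℝⁿ → ℝⁿ be a linear map such that ‖T x‖₁ = ‖x‖₁ for every x ∈ ℝⁿ. Then there exist a permutation σ of {1,…,n} and signs ε₁,…,εₙ ∈ {−1,+1} such that T eₖ = εₖ e_{σ(k)} for every k, where e₁,…,eₙ denotes the standard basis of ℝⁿ. In other words, every linear isometry of ℝⁿ with respect to the one-norm is a composition of a coordinate permutation and sign changes of coordinates. -/
/-!
The images `T eₖ` of the basis vectors have one-norm 1. For `k ≠ l` the vectors `eₖ ± eₗ` have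
one-norm 2, so summing the coordinatewise inequality `|a + b| + |a - b| ≤ 2|a| + 2|b|` over
`a = T eₖ`, `b = T eₗ` gives `4 ≤ 4`; equality at every coordinate forces `a` and `b` to have
disjoint supports. Nonzero vectors `T e₁, …, T eₙ` with pairwise disjoint supports in `ℝⁿ` are
each supported on a single coordinate, distinct for distinct `k`, and that coordinate is `±1`.
-/

open Finset

theorem eq_zero_or_eq_zero_of_abs_add_add_abs_sub_eq {α : Type*} [Field α] [LinearOrder α]
    [IsStrictOrderedRing α] {a b : α} (h : |a + b| + |a - b| = 2 * |a| + 2 * |b|) :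
    a = 0 ∨ b = 0 := by
  rcases abs_cases a with ⟨ha, _⟩ | ⟨ha, _⟩ <;> rcases abs_cases b with ⟨hb, _⟩ | ⟨hb, _⟩ <;>
    rcases abs_cases (a + b) with ⟨hs, _⟩ | ⟨hs, _⟩ <;>
    rcases abs_cases (a - b) with ⟨hd, _⟩ | ⟨hd, _⟩ <;> rw [ha, hb, hs, hd] at h <;>
    first | (left; linarith) | (right; linarith)

theorem sum_abs_single {ι α : Type*} [Fintype ι] [DecidableEq ι] [AddCommGroup α] [LinearOrder α]
    [IsOrderedAddMonoid α] (k : ι) (a : α) : ∑ j, |(Pi.single k a : ι → α) j| = |a| := by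
  simp [Pi.single_apply, apply_ite abs]

theorem sum_abs_single_add_single {ι α : Type*} [Fintype ι] [DecidableEq ι] [AddCommGroup α]
    [LinearOrder α] [IsOrderedAddMonoid α] {k l : ι} (hkl : k ≠ l) (a b : α) :
    ∑ j, |(Pi.single k a + Pi.single l b : ι → α) j| = |a| + |b| := by
  have hpt : ∀ j, |(Pi.single k a + Pi.single l b : ι → α) j|
      = |(Pi.single k a : ι → α) j| + |(Pi.single l b : ι → α) j| := by
    intro j
    by_cases hjk : j = k
    · subst hjk; simp [hkl]
    · simp [hjk]
  simp only [hpt, sum_add_distrib, sum_abs_single]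

theorem exists_perm_eq_single_of_disjoint {ι M : Type*} [Finite ι] [DecidableEq ι] [Zero M]
    (v : ι → ι → M) (hv : ∀ k, v k ≠ 0) (hdisj : ∀ k l, k ≠ l → ∀ j, v k j = 0 ∨ v l j = 0) :
    ∃ σ : Equiv.Perm ι, ∀ k, v k = Pi.single (σ k) (v k (σ k)) := by
  choose j hj using fun k => Function.ne_iff.mp (hv k)
  have hinj : Function.Injective j := by
    intro k l hjkl
    by_contra hkl
    rcases hdisj k l hkl (j k) with h | h
    · exact hj k h
    · exact hj l (hjkl ▸ h)
  have hbij : Function.Bijective j := Finite.injective_iff_bijective.mp hinj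
  refine ⟨Equiv.ofBijective j hbij, fun k => funext fun i => ?_⟩
  obtain ⟨l, rfl⟩ := hbij.2 i
  by_cases hkl : k = l
  · subst hkl; simp
  · have : j l ≠ j k := hinj.ne (Ne.symm hkl)
    simp only [Equiv.ofBijective_apply, Pi.single_apply, this, if_false]
    exact (hdisj k l hkl (j l)).resolve_right (hj l)

section OneNormIsometry

variable {ι κ 𝕜 : Type*} [Fintype ι] [DecidableEq ι] [Fintype κ] [Field 𝕜] [LinearOrder 𝕜]
  [IsStrictOrderedRing 𝕜] {T : (ι → 𝕜) →ₗ[𝕜] (κ → 𝕜)}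

theorem sum_abs_apply_single_of_isometry (hT : ∀ x, ∑ j, |T x j| = ∑ j, |x j|) (k : ι) :
    ∑ j, |T (Pi.single k 1) j| = 1 := by
  rw [hT, sum_abs_single, abs_one]

theorem apply_single_eq_zero_or_eq_zero_of_isometry (hT : ∀ x, ∑ j, |T x j| = ∑ j, |x j|)
    {k l : ι} (hkl : k ≠ l) (i : κ) :
    T (Pi.single k 1) i = 0 ∨ T (Pi.single l 1) i = 0 := by
  set a := T (Pi.single k 1)
  set b := T (Pi.single l 1)
  have hsum (s : 𝕜) (hs : |s| = 1) : ∑ j, |a j + s * b j| = 2 := by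
    have hsingle : (Pi.single l s : ι → 𝕜) = s • Pi.single l 1 := by
      rw [← Pi.single_smul', smul_eq_mul, mul_one]
    have h := hT (Pi.single k 1 + Pi.single l s)
    rw [sum_abs_single_add_single hkl, abs_one, hs, hsingle, map_add, map_smul] at h
    simpa [a, b, one_add_one_eq_two] using h
  have hle : ∀ j ∈ univ, |a j + b j| + |a j - b j| ≤ 2 * |a j| + 2 * |b j| := fun j _ => by
    linarith [abs_add_le (a j) (b j), abs_sub (a j) (b j)]
  have heq : ∑ j, (|a j + b j| + |a j - b j|) = ∑ j, (2 * |a j| + 2 * |b j|) := by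
    have hplus := hsum 1 abs_one
    have hminus := hsum (-1) (by simp)
    simp only [one_mul, neg_one_mul, ← sub_eq_add_neg] at hplus hminus
    rw [sum_add_distrib, sum_add_distrib, ← mul_sum, ← mul_sum, hplus, hminus,
      sum_abs_apply_single_of_isometry hT, sum_abs_apply_single_of_isometry hT]
    norm_num
  exact eq_zero_or_eq_zero_of_abs_add_add_abs_sub_eq
    ((sum_eq_sum_iff_of_le hle).mp heq i (mem_univ i))

end OneNormIsometry

theorem one_norm_isometry_is_signed_permutation_general (n : ℕ)
    (T : (Fin n → ℝ) →ₗ[ℝ] (Fin n → ℝ))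
    (hT : ∀ x : Fin n → ℝ, ∑ j, |T x j| = ∑ j, |x j|) :
    ∃ (σ : Equiv.Perm (Fin n)) (ε : Fin n → ℝ),
      (∀ k, ε k = 1 ∨ ε k = -1) ∧
      ∀ k, T (Pi.single k 1) = ε k • (Pi.single (σ k) 1 : Fin n → ℝ) := by
  have hne (k : Fin n) : T (Pi.single k 1) ≠ 0 := fun h => by
    simpa [h] using sum_abs_apply_single_of_isometry hT k
  obtain ⟨σ, hσ⟩ := exists_perm_eq_single_of_disjoint (fun k => T (Pi.single k 1)) hne
    fun k l hkl => apply_single_eq_zero_or_eq_zero_of_isometry hT hkl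
  refine ⟨σ, fun k => T (Pi.single k 1) (σ k), fun k => ?_, fun k => ?_⟩
  · have h := sum_abs_apply_single_of_isometry hT k
    rw [hσ k, sum_abs_single] at h
    exact (abs_eq zero_le_one).mp h
  · rw [← Pi.single_smul', smul_eq_mul, mul_one]
    exact hσ k

/-- Every linear isometry of `ℝⁿ` with respect to the one-norm is a composition of a
coordinate permutation and sign changes of coordinates. -/
theorem one_norm_isometry_is_signed_permutation (n : ℕ) (hn : 1 ≤ n)
    (T : (Fin n → ℝ) →ₗ[ℝ] (Fin n → ℝ))
    (hT : ∀ x : Fin n → ℝ, ∑ j, |T x j| = ∑ j, |x j|) :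
    ∃ (σ : Equiv.Perm (Fin n)) (ε : Fin n → ℝ),
      (∀ k, ε k = 1 ∨ ε k = -1) ∧
      ∀ k, T (Pi.single k 1) = ε k • (Pi.single (σ k) 1 : Fin n → ℝ) :=
  one_norm_isometry_is_signed_permutation_general n T hT
end

section
/- Let q, m ≥ 1 and let s = (s₁,…,s_m) ∈ ℤ^m and s' = (s'₁,…,s'_m) ∈ ℤ^m with every sⱼ and every s'ⱼ coprime to q. Then the congruence lattices 𝓛(q;s₁,…,s_m) and 𝓛(q;s'₁,…,s'_m) are ‖·‖₁-isometric if and only if there exist a permutation σ of {1,…,m}, signs ε₁,…,ε_m ∈ {−1,+1}, and an integer t coprime to q such that s'_{σ(j)} ≡ t εⱼ sⱼ (mod q) for all 1 ≤ j ≤ m. -/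
/-- The congruence lattice `𝓛(q; s₁, …, s_m) = {a ∈ ℤ^m : ∑ aⱼsⱼ ≡ 0 (mod q)}`. -/
def congLat (q m : ℕ) (s : Fin m → ℤ) : Set (Fin m → ℤ) :=
  {a | (q : ℤ) ∣ ∑ j, a j * s j}

/-- The image of a subset of `ℤ^m` inside `ℝ^m`. -/
def intCastImg {m : ℕ} (L : Set (Fin m → ℤ)) : Set (Fin m → ℝ) :=
  (fun (a : Fin m → ℤ) (j : Fin m) => (a j : ℝ)) '' L

/-- Two subsets of `ℤ^m` are `‖·‖₁`-isometric if some linear bijection of `ℝ^m`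
preserving the one-norm maps one onto the other. -/
def OneNormIsometric {m : ℕ} (L L' : Set (Fin m → ℤ)) : Prop :=
  ∃ T : (Fin m → ℝ) ≃ₗ[ℝ] (Fin m → ℝ),
    (∀ x : Fin m → ℝ, ∑ j, |T x j| = ∑ j, |x j|) ∧
    T '' (intCastImg L) = intCastImg L'

/-!
A linear map of `ℝ^m` preserving `‖·‖₁` is a signed permutation. Indeed, for vectors `u, v`
one has `‖u + v‖₁ = ‖u - v‖₁ = ‖u‖₁ + ‖v‖₁` exactly when `u` and `v` have disjoint supports, so
the images of the standard basis vectors are `m` disjointly supported vectors of norm one, which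
forces them to be `±` the standard basis vectors in some order. A signed permutation maps integer
points to integer points, and it carries `𝓛(q; s)` onto `𝓛(q; s')` iff
`𝓛(q; s) = 𝓛(q; (εⱼ s'_{σ j})ⱼ)`. Finally, two congruence lattices with unit coefficients coincide
iff their defining functionals `a ↦ ∑ aⱼsⱼ mod q` are proportional by a unit: comparing them on
`u_j e_{j₀} - u_{j₀} e_j`, which lies in the first lattice, gives the proportionality.
-/

open Matrix

section SignedPerm

variable {ι : Type*} (R : Type*) [Ring R] (σ : Equiv.Perm ι) (ε : ι → ℤˣ)

def signedPerm : (ι → R) ≃ₗ[R] (ι → R) where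
  toFun x i := ε (σ.symm i) • x (σ.symm i)
  invFun y j := ε j • y (σ j)
  map_add' x y := by ext i; simp [smul_add]
  map_smul' c x := by ext i; simp [mul_smul_comm]
  left_inv x := by ext j; simp [smul_smul, Int.units_mul_self]
  right_inv y := by ext i; simp [smul_smul, Int.units_mul_self]

variable {R}

@[simp]
lemma signedPerm_apply_apply (x : ι → R) (j : ι) : signedPerm R σ ε x (σ j) = ε j • x j := by
  simp [signedPerm]

lemma signedPerm_intCast (a : ι → ℤ) :
    signedPerm R σ ε (fun j => (a j : R)) = fun i => (signedPerm ℤ σ ε a i : R) := by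
  ext i
  obtain ⟨j, rfl⟩ := σ.surjective i
  simp [Units.smul_def]

end SignedPerm

lemma abs_units_smul {α : Type*} [AddCommGroup α] [LinearOrder α] [IsOrderedAddMonoid α]
    (u : ℤˣ) (a : α) : |u • a| = |a| := by
  rw [Units.smul_def, abs_zsmul, Int.abs_eq_natAbs, Int.units_natAbs, Nat.cast_one, one_smul]

lemma mul_eq_zero_of_abs_add_eq_of_abs_sub_eq {α : Type*} [CommRing α] [LinearOrder α]
    [IsStrictOrderedRing α] {a b : α} (hadd : |a + b| = |a| + |b|) (hsub : |a - b| = |a| + |b|) :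
    a * b = 0 := by
  rw [abs_add_eq_add_abs_iff] at hadd
  rw [sub_eq_add_neg, ← abs_neg b, abs_add_eq_add_abs_iff] at hsub
  rcases hadd with ⟨ha, hb⟩ | ⟨ha, hb⟩ <;> rcases hsub with ⟨ha', hb'⟩ | ⟨ha', hb'⟩ <;> nlinarith

section OneNorm

variable {ι : Type*} [Fintype ι]

lemma mul_eq_zero_iff_sum_abs_add_eq_and_sum_abs_sub_eq (u v : ι → ℝ) :
    u * v = 0 ↔ ∑ i, |u i + v i| = ∑ i, |u i| + ∑ i, |v i| ∧
      ∑ i, |u i - v i| = ∑ i, |u i| + ∑ i, |v i| := by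
  simp only [← Finset.sum_add_distrib]
  rw [Finset.sum_eq_sum_iff_of_le fun i _ => abs_add_le _ _,
    Finset.sum_eq_sum_iff_of_le fun i _ => abs_sub _ _, funext_iff]
  refine ⟨fun h => ⟨fun i _ => ?_, fun i _ => ?_⟩,
    fun h i => mul_eq_zero_of_abs_add_eq_of_abs_sub_eq (h.1 i (Finset.mem_univ i))
      (h.2 i (Finset.mem_univ i))⟩
  · rcases mul_eq_zero.1 (h i) with h | h <;> simp [h]
  · rcases mul_eq_zero.1 (h i) with h | h <;> simp [h]

lemma map_mul_map_eq_zero_of_sum_abs_map_eq (T : (ι → ℝ) →ₗ[ℝ] (ι → ℝ))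
    (hT : ∀ x, ∑ i, |T x i| = ∑ i, |x i|) {u v : ι → ℝ} (huv : u * v = 0) : T u * T v = 0 := by
  rw [mul_eq_zero_iff_sum_abs_add_eq_and_sum_abs_sub_eq] at huv ⊢
  have hadd := hT (u + v)
  have hsub := hT (u - v)
  simp only [map_add, map_sub, Pi.add_apply, Pi.sub_apply] at hadd hsub
  rwa [hadd, hsub, hT u, hT v]

end OneNorm

lemma exists_perm_forall_ne_eq_zero_of_pairwise_mul_eq_zero {ι M₀ : Type*} [Finite ι]
    [MulZeroClass M₀] [NoZeroDivisors M₀] (c : ι → ι → M₀) (hc : ∀ j, c j ≠ 0)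
    (hdisj : Pairwise fun j k => c j * c k = 0) :
    ∃ σ : Equiv.Perm ι, ∀ j i, i ≠ σ j → c j i = 0 := by
  choose π hπ using fun j => Function.ne_iff.1 (hc j)
  have hoff : ∀ j k, j ≠ k → c j (π k) = 0 := fun j k hjk =>
    (mul_eq_zero.1 (congrFun (hdisj hjk) (π k))).resolve_right (hπ k)
  have hinj : Function.Injective π := fun j k h =>
    by_contra fun hjk => hπ j (h ▸ hoff j k hjk)
  refine ⟨Equiv.ofBijective π (Finite.injective_iff_bijective.1 hinj), fun j i hi => ?_⟩
  obtain ⟨k, rfl⟩ := (Finite.injective_iff_bijective.1 hinj).2 i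
  exact hoff j k fun h => hi (h ▸ rfl)

theorem exists_signedPerm_eq_of_sum_abs_map_eq {ι : Type*} [Fintype ι] [DecidableEq ι]
    (T : (ι → ℝ) →ₗ[ℝ] (ι → ℝ)) (hT : ∀ x, ∑ i, |T x i| = ∑ i, |x i|) :
    ∃ σ ε, T = (signedPerm ℝ σ ε).toLinearMap := by
  set c : ι → ι → ℝ := fun j => T (Pi.single j 1) with hc
  have hc1 : ∀ j, ∑ i, |c j i| = 1 := fun j => by
    simp [hc, hT, Pi.single_apply, apply_ite (abs : ℝ → ℝ)]
  obtain ⟨σ, hσ⟩ := exists_perm_forall_ne_eq_zero_of_pairwise_mul_eq_zero c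
    (fun j h => by simpa [h] using hc1 j)
    (fun j k hjk => map_mul_map_eq_zero_of_sum_abs_map_eq T hT <| by
      ext i; by_cases hi : i = j <;> simp [Pi.single_apply, hi, hjk])
  have habs : ∀ j, |c j (σ j)| = 1 := fun j => by
    rw [← hc1 j, Finset.sum_eq_single (σ j) (fun i _ hi => by rw [hσ j i hi, abs_zero])
      (fun h => (h (Finset.mem_univ _)).elim)]
  have hunit : ∀ j, ∃ e : ℤˣ, c j (σ j) = e • 1 := fun j => by
    rcases (abs_eq zero_le_one).1 (habs j) with h | h
    · exact ⟨1, by simp [h]⟩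
    · exact ⟨-1, by simp [h]⟩
  choose ε hε using hunit
  refine ⟨σ, ε, (Pi.basisFun ℝ ι).ext fun j => ?_⟩
  ext i
  obtain ⟨k, rfl⟩ := σ.surjective i
  by_cases hkj : k = j
  · subst hkj
    simpa using hε k
  · simpa [hkj] using hσ j (σ k) (σ.injective.ne hkj)

lemma sum_abs_signedPerm_apply {ι : Type*} [Fintype ι] (σ : Equiv.Perm ι) (ε : ι → ℤˣ)
    (x : ι → ℝ) : ∑ i, |signedPerm ℝ σ ε x i| = ∑ i, |x i| := by
  rw [← Equiv.sum_comp σ]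
  simp [abs_units_smul]

section IntCastImg

variable {m : ℕ}

lemma intCastImg_injective : Function.Injective (intCastImg (m := m)) :=
  Set.image_injective.2 fun _ _ h => funext fun j => Int.cast_injective (congrFun h j)

lemma image_signedPerm_intCastImg (σ : Equiv.Perm (Fin m)) (ε : Fin m → ℤˣ)
    (L : Set (Fin m → ℤ)) :
    signedPerm ℝ σ ε '' intCastImg L = intCastImg (signedPerm ℤ σ ε '' L) := by
  simp only [intCastImg, Set.image_image, signedPerm_intCast]

theorem oneNormIsometric_iff_exists_signedPerm (L L' : Set (Fin m → ℤ)) :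
    OneNormIsometric L L' ↔ ∃ σ ε, signedPerm ℤ σ ε '' L = L' := by
  constructor
  · rintro ⟨T, hT, hLL'⟩
    obtain ⟨σ, ε, hσε⟩ := exists_signedPerm_eq_of_sum_abs_map_eq T.toLinearMap hT
    refine ⟨σ, ε, intCastImg_injective ?_⟩
    rw [← image_signedPerm_intCastImg, ← hLL']
    exact congrArg (Set.image · _) (congrArg DFunLike.coe hσε).symm
  · rintro ⟨σ, ε, rfl⟩
    exact ⟨signedPerm ℝ σ ε, sum_abs_signedPerm_apply σ ε, image_signedPerm_intCastImg σ ε L⟩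

end IntCastImg

section CongLat

variable {q m : ℕ}

lemma mem_congLat {s a : Fin m → ℤ} : a ∈ congLat q m s ↔ (q : ℤ) ∣ a ⬝ᵥ s := Iff.rfl

lemma preimage_signedPerm_congLat (σ : Equiv.Perm (Fin m)) (ε : Fin m → ℤˣ) (s : Fin m → ℤ) :
    signedPerm ℤ σ ε ⁻¹' congLat q m s = congLat q m fun j => ε j * s (σ j) := by
  ext a
  rw [Set.mem_preimage, mem_congLat, mem_congLat, dotProduct, dotProduct, ← Equiv.sum_comp σ]
  congr! 2 with j
  rw [signedPerm_apply_apply, Units.smul_def, smul_eq_mul]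
  ring

lemma congLat_eq_of_modEq {u v : Fin m → ℤ} {t : ℤ} (ht : IsCoprime t (q : ℤ))
    (hvu : ∀ j, v j ≡ t * u j [ZMOD (q : ℤ)]) : congLat q m u = congLat q m v := by
  ext a
  have hsum : a ⬝ᵥ v ≡ t * (a ⬝ᵥ u) [ZMOD q] := by
    simp only [dotProduct, Finset.mul_sum, mul_left_comm t]
    exact Int.ModEq.sum fun j _ => (hvu j).mul_left _
  rw [mem_congLat, mem_congLat, hsum.dvd_iff]
  exact ⟨fun h => h.mul_left t, ht.symm.dvd_of_dvd_mul_left⟩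

lemma exists_modEq_of_congLat_eq {u v : Fin m → ℤ} (j₀ : Fin m) (hu : IsCoprime (u j₀) (q : ℤ))
    (hv : IsCoprime (v j₀) (q : ℤ)) (h : congLat q m u = congLat q m v) :
    ∃ t : ℤ, IsCoprime t (q : ℤ) ∧ ∀ j, v j ≡ t * u j [ZMOD (q : ℤ)] := by
  obtain ⟨A, B, hAB⟩ := hu
  refine ⟨A * v j₀, IsCoprime.mul_left ⟨u j₀, B, by linear_combination hAB⟩ hv, fun j => ?_⟩
  have hmem : Pi.single j₀ (u j) - Pi.single j (u j₀) ∈ congLat q m u := by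
    simp [mem_congLat, sub_dotProduct, mul_comm]
  rw [h, mem_congLat, sub_dotProduct, single_dotProduct, single_dotProduct] at hmem
  refine Int.modEq_iff_dvd.2 ?_
  have hcomb : A * v j₀ * u j - v j = A * (u j * v j₀ - u j₀ * v j) - B * v j * q := by
    linear_combination v j * hAB
  rw [hcomb]
  exact (hmem.mul_left A).sub (dvd_mul_left _ _)

lemma congLat_eq_congLat_iff {u v : Fin m → ℤ} (hu : ∀ j, IsCoprime (u j) (q : ℤ))
    (hv : ∀ j, IsCoprime (v j) (q : ℤ)) :
    congLat q m u = congLat q m v ↔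
      ∃ t : ℤ, IsCoprime t (q : ℤ) ∧ ∀ j, v j ≡ t * u j [ZMOD (q : ℤ)] := by
  refine ⟨fun h => ?_, fun ⟨t, ht, hvu⟩ => congLat_eq_of_modEq ht hvu⟩
  rcases isEmpty_or_nonempty (Fin m) with hm | ⟨⟨j₀⟩⟩
  · exact ⟨1, isCoprime_one_left, isEmptyElim⟩
  · exact exists_modEq_of_congLat_eq j₀ (hu j₀) (hv j₀) h

end CongLat

lemma Int.units_mul_modEq_iff {n a b : ℤ} (u : ℤˣ) : u * a ≡ b [ZMOD n] ↔ a ≡ u * b [ZMOD n] := by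
  constructor <;> intro h <;> simpa [← mul_assoc, Int.units_mul_self] using h.mul_left u

theorem congLat_oneNormIsometric_iff_general (q m : ℕ)
    (s s' : Fin m → ℤ)
    (hs : ∀ j, IsCoprime (s j) (q : ℤ)) (hs' : ∀ j, IsCoprime (s' j) (q : ℤ)) :
    OneNormIsometric (congLat q m s) (congLat q m s') ↔
      ∃ (σ : Equiv.Perm (Fin m)) (ε : Fin m → ℤ) (t : ℤ),
        (∀ j, ε j = 1 ∨ ε j = -1) ∧ IsCoprime t (q : ℤ) ∧
        ∀ j, s' (σ j) ≡ t * ε j * s j [ZMOD (q : ℤ)] := by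
  have key : ∀ σ ε, signedPerm ℤ σ ε '' congLat q m s = congLat q m s' ↔
      ∃ t : ℤ, IsCoprime t (q : ℤ) ∧ ∀ j, s' (σ j) ≡ t * ε j * s j [ZMOD (q : ℤ)] := fun σ ε => by
    rw [← Set.eq_preimage_iff_image_eq (signedPerm ℤ σ ε).bijective, preimage_signedPerm_congLat,
      congLat_eq_congLat_iff hs fun j => (isCoprime_mul_unit_left_left (ε j).isUnit _ _).2 (hs' _)]
    simp only [Int.units_mul_modEq_iff, mul_left_comm (ε _ : ℤ), mul_assoc]
  rw [oneNormIsometric_iff_exists_signedPerm]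
  constructor
  · rintro ⟨σ, ε, h⟩
    obtain ⟨t, ht, hst⟩ := (key σ ε).1 h
    exact ⟨σ, fun j => ε j, t, fun j => Int.isUnit_iff.1 (ε j).isUnit, ht, hst⟩
  · rintro ⟨σ, ε, t, hε, ht, hst⟩
    exact ⟨σ, fun j => (Int.isUnit_iff.2 (hε j)).unit, (key σ _).2 ⟨t, ht, hst⟩⟩

/-- Two congruence lattices are `‖·‖₁`-isometric iff the parameters are related by a
permutation, signs, and a unit `t` modulo `q`. -/
theorem congLat_oneNormIsometric_iff (q m : ℕ) (hq : 1 ≤ q) (hm : 1 ≤ m)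
    (s s' : Fin m → ℤ)
    (hs : ∀ j, IsCoprime (s j) (q : ℤ)) (hs' : ∀ j, IsCoprime (s' j) (q : ℤ)) :
    OneNormIsometric (congLat q m s) (congLat q m s') ↔
      ∃ (σ : Equiv.Perm (Fin m)) (ε : Fin m → ℤ) (t : ℤ),
        (∀ j, ε j = 1 ∨ ε j = -1) ∧ IsCoprime t (q : ℤ) ∧
        ∀ j, s' (σ j) ≡ t * ε j * s j [ZMOD (q : ℤ)] :=
  congLat_oneNormIsometric_iff_general q m s s' hs hs'
end

section
/- Let m ≥ 1 and 0 ≤ p ≤ m. For a subset I of {1,…,2m}, define w(I) = (w₁,…,w_m) ∈ ℤ^m by wⱼ = 1 if j ∈ I and j+m ∉ I, wⱼ = −1 if j ∉ I and j+m ∈ I, and wⱼ = 0 otherwise. Then for μ = (a₁,…,a_m) ∈ ℤ^m, the number of subsets I ⊆ {1,…,2m} with |I| = p and w(I) = μ equals C(m−p+2r, r) if |aⱼ| ≤ 1 for all j and p − ‖μ‖₁ = 2r for some nonnegative integer r, and equals 0 otherwise. -/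
/-- The weight of a subset `I` of `{1,…,2m}` (encoded as `Fin m ⊕ Fin m`, where
`inl j` plays the role of `j` and `inr j` the role of `j + m`):
`wⱼ = 1` if `j ∈ I, j+m ∉ I`; `wⱼ = -1` if `j ∉ I, j+m ∈ I`; `wⱼ = 0` otherwise. -/
def extWeight (m : ℕ) (I : Finset (Fin m ⊕ Fin m)) : Fin m → ℤ := fun j =>
  if Sum.inl j ∈ I ∧ Sum.inr j ∉ I then 1
  else if Sum.inl j ∉ I ∧ Sum.inr j ∈ I then -1 else 0

/-!
A subset `I` of weight `a` is determined by the set `S = I.toLeft ∩ I.toRight` of indices `j`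
with both `j` and `j + m` in `I`: it must contain `j` exactly when `a j = 1` or `j ∈ S`, and
`j + m` exactly when `a j = -1` or `j ∈ S`. Conversely any `S` inside the zero set of `a` arises
this way, and then `|I| = ‖a‖₁ + 2|S|`. So the `p`-element subsets of weight `a` correspond to
the `r`-element subsets of the zero set of `a`, which has `m - ‖a‖₁ = m - p + 2r` elements.
-/

open Finset Sum

section
variable {m : ℕ} {a : Fin m → ℤ} {I : Finset (Fin m ⊕ Fin m)} {S : Finset (Fin m)}

lemma abs_extWeight_le_one (I : Finset (Fin m ⊕ Fin m)) (j : Fin m) :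
    |extWeight m I j| ≤ 1 := by
  unfold extWeight
  split_ifs <;> norm_num

lemma extWeight_cases (h : extWeight m I = a) (j : Fin m) :
    (a j = 1 ∧ inl j ∈ I ∧ inr j ∉ I) ∨ (a j = -1 ∧ inl j ∉ I ∧ inr j ∈ I) ∨
      (a j = 0 ∧ (inl j ∈ I ↔ inr j ∈ I)) := by
  subst h
  unfold extWeight
  split_ifs <;> tauto

lemma sum_abs_eq_card_add_card (ha : ∀ j, |a j| ≤ 1) :
    ∑ j, |a j| = (#{j | a j = 1} + #{j | a j = -1} : ℕ) := by
  push_cast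
  simp only [card_filter, Nat.cast_sum, Nat.cast_ite, Nat.cast_one, Nat.cast_zero,
    ← sum_add_distrib]
  refine sum_congr rfl fun j _ => ?_
  rcases Int.abs_le_one_iff.mp (ha j) with h | h | h <;> simp [h]

lemma card_add_card_add_card (ha : ∀ j, |a j| ≤ 1) :
    #{j | a j = 1} + #{j | a j = -1} + #{j | a j = 0} = m := by
  conv_rhs => rw [← Fintype.card_fin m, ← card_univ, card_eq_sum_ones]
  simp only [card_filter, ← sum_add_distrib]
  refine sum_congr rfl fun j _ => ?_
  rcases Int.abs_le_one_iff.mp (ha j) with h | h | h <;> simp [h]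

variable (a) in
def subsetWithWeight (S : Finset (Fin m)) : Finset (Fin m ⊕ Fin m) :=
  (({j | a j = 1} : Finset (Fin m)) ∪ S).disjSum (({j | a j = -1} : Finset (Fin m)) ∪ S)

@[simp]
lemma inl_mem_subsetWithWeight {j : Fin m} :
    inl j ∈ subsetWithWeight a S ↔ a j = 1 ∨ j ∈ S := by
  simp [subsetWithWeight]

@[simp]
lemma inr_mem_subsetWithWeight {j : Fin m} :
    inr j ∈ subsetWithWeight a S ↔ a j = -1 ∨ j ∈ S := by
  simp [subsetWithWeight]

lemma extWeight_subsetWithWeight (ha : ∀ j, |a j| ≤ 1)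
    (hS : S ⊆ ({j | a j = 0} : Finset (Fin m))) :
    extWeight m (subsetWithWeight a S) = a := by
  funext j
  have hS' : j ∈ S → a j = 0 := fun hj => by simpa using hS hj
  unfold extWeight
  rcases Int.abs_le_one_iff.mp (ha j) with h | h | h <;> by_cases hj : j ∈ S <;> simp_all

lemma card_subsetWithWeight (hS : S ⊆ ({j | a j = 0} : Finset (Fin m))) :
    #(subsetWithWeight a S) = #{j | a j = 1} + #{j | a j = -1} + 2 * #S := by
  have disj (k : ℤ) (hk : k ≠ 0) : Disjoint ({j | a j = k} : Finset (Fin m)) S :=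
    disjoint_left.mpr fun j hj hjS => hk (by simpa [(mem_filter.mp hj).2] using hS hjS)
  rw [subsetWithWeight, card_disjSum, card_union_of_disjoint (disj 1 one_ne_zero),
    card_union_of_disjoint (disj (-1) (by norm_num))]
  ring

lemma toLeft_inter_toRight_subsetWithWeight (hS : S ⊆ ({j | a j = 0} : Finset (Fin m))) :
    (subsetWithWeight a S).toLeft ∩ (subsetWithWeight a S).toRight = S := by
  ext j
  have hS' : j ∈ S → a j = 0 := fun hj => by simpa using hS hj
  simp only [mem_inter, mem_toLeft, mem_toRight, inl_mem_subsetWithWeight,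
    inr_mem_subsetWithWeight]
  constructor
  · rintro ⟨h1 | h1, h2 | h2⟩ <;> first | assumption | omega
  · exact fun hj => ⟨Or.inr hj, Or.inr hj⟩

lemma toLeft_inter_toRight_subset_of_extWeight_eq (h : extWeight m I = a) :
    I.toLeft ∩ I.toRight ⊆ ({j | a j = 0} : Finset (Fin m)) := by
  intro j hj
  simp only [mem_inter, mem_toLeft, mem_toRight] at hj
  simp only [mem_filter, mem_univ, true_and]
  rcases extWeight_cases h j with ⟨-, -, h'⟩ | ⟨-, h', -⟩ | ⟨h', -⟩ <;> tauto

lemma subsetWithWeight_toLeft_inter_toRight (h : extWeight m I = a) :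
    subsetWithWeight a (I.toLeft ∩ I.toRight) = I := by
  ext (j | j) <;>
    simp only [inl_mem_subsetWithWeight, inr_mem_subsetWithWeight, mem_inter, mem_toLeft,
      mem_toRight] <;>
    rcases extWeight_cases h j with ⟨h1, h2, h3⟩ | ⟨h1, h2, h3⟩ | ⟨h1, h2⟩ <;>
    simp only [h1] <;> tauto

lemma card_eq_of_extWeight_eq (h : extWeight m I = a) :
    #I = #{j | a j = 1} + #{j | a j = -1} + 2 * #(I.toLeft ∩ I.toRight) := by
  conv_lhs => rw [← subsetWithWeight_toLeft_inter_toRight h]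
  exact card_subsetWithWeight (toLeft_inter_toRight_subset_of_extWeight_eq h)

lemma card_filter_extWeight_eq (ha : ∀ j, |a j| ≤ 1) (p : ℕ) :
    #{I : Finset (Fin m ⊕ Fin m) | #I = p ∧ extWeight m I = a} =
      #{S ∈ ({j | a j = 0} : Finset (Fin m)).powerset |
        #{j | a j = 1} + #{j | a j = -1} + 2 * #S = p} := by
  refine card_nbij' (fun I => I.toLeft ∩ I.toRight) (subsetWithWeight a) ?_ ?_ ?_ ?_
  · rintro I hI
    simp only [coe_filter, Set.mem_ofPred_eq, mem_univ, true_and] at hI ⊢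
    exact ⟨mem_powerset.mpr (toLeft_inter_toRight_subset_of_extWeight_eq hI.2),
      (card_eq_of_extWeight_eq hI.2).symm.trans hI.1⟩
  · rintro S hS
    simp only [coe_filter, Set.mem_ofPred_eq, mem_univ, true_and, mem_powerset] at hS ⊢
    exact ⟨(card_subsetWithWeight hS.1).trans hS.2, extWeight_subsetWithWeight ha hS.1⟩
  · rintro I hI
    simp only [coe_filter, Set.mem_ofPred_eq, mem_univ, true_and] at hI
    exact subsetWithWeight_toLeft_inter_toRight hI.2
  · rintro S hS
    simp only [coe_filter, Set.mem_ofPred_eq, mem_powerset] at hS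
    exact toLeft_inter_toRight_subsetWithWeight hS.1

end

theorem count_exterior_weight_general (m p : ℕ) (hp : p ≤ m) (a : Fin m → ℤ) :
    (∀ r : ℕ, (∀ j, |a j| ≤ 1) → (p : ℤ) - ∑ j, |a j| = 2 * r →
      Nat.card {I : Finset (Fin m ⊕ Fin m) // I.card = p ∧ extWeight m I = a}
        = (m - p + 2 * r).choose r) ∧
    (¬ ((∀ j, |a j| ≤ 1) ∧ ∃ r : ℕ, (p : ℤ) - ∑ j, |a j| = 2 * r) →
      Nat.card {I : Finset (Fin m ⊕ Fin m) // I.card = p ∧ extWeight m I = a}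
        = 0) := by
  rw [Nat.card_eq_fintype_card, Fintype.card_subtype]
  constructor
  · intro r ha hsum
    rw [sum_abs_eq_card_add_card ha] at hsum
    have hcard := card_add_card_add_card ha
    rw [card_filter_extWeight_eq ha, filter_congr (q := fun S => #S = r) (by intros; omega),
      ← powersetCard_eq_filter, card_powersetCard]
    congr 1
    omega
  · intro hno
    rw [card_eq_zero, filter_eq_empty_iff]
    rintro I - ⟨rfl, hI⟩
    have ha : ∀ j, |a j| ≤ 1 := hI ▸ abs_extWeight_le_one I
    refine hno ⟨ha, #(I.toLeft ∩ I.toRight), ?_⟩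
    rw [sum_abs_eq_card_add_card ha, card_eq_of_extWeight_eq hI]
    push_cast
    ring

/-- The number of `p`-element subsets `I ⊆ {1,…,2m}` with weight `μ = a` equals
`C(m-p+2r, r)` if all `|aⱼ| ≤ 1` and `p - ‖a‖₁ = 2r ≥ 0`, and `0` otherwise. -/
theorem count_exterior_weight (m p : ℕ) (hm : 1 ≤ m) (hp : p ≤ m) (a : Fin m → ℤ) :
    (∀ r : ℕ, (∀ j, |a j| ≤ 1) → (p : ℤ) - ∑ j, |a j| = 2 * r →
      Nat.card {I : Finset (Fin m ⊕ Fin m) // I.card = p ∧ extWeight m I = a}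
        = (m - p + 2 * r).choose r) ∧
    (¬ ((∀ j, |a j| ≤ 1) ∧ ∃ r : ℕ, (p : ℤ) - ∑ j, |a j| = 2 * r) →
      Nat.card {I : Finset (Fin m ⊕ Fin m) // I.card = p ∧ extWeight m I = a}
        = 0) :=
  count_exterior_weight_general m p hp a
end

section
/- Let q, m ≥ 1, let s ∈ ℤ^m, and let 𝓛 = 𝓛(q;s₁,…,s_m) be the associated congruence lattice. Let k ∈ ℕ and write k = αq + r₀ with α ∈ ℕ and 0 ≤ r₀ < q. Then for every integer z with 0 ≤ z ≤ m−1: N_𝓛(k,z) = Σ_{s'=0}^{m−z} 2^{s'} C(z+s', s') Σ_{t=s'}^{α} C(t−s'+m−z−1, m−z−1) N^red_𝓛(k−tq, z+s'). -/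
/-- `N_𝓛(k, z)`: the number of `μ ∈ 𝓛` with `‖μ‖₁ = k` and exactly `z` zero coordinates. -/
noncomputable def NL (q m : ℕ) (s : Fin m → ℤ) (k z : ℕ) : ℕ :=
  Nat.card {a : Fin m → ℤ // a ∈ congLat q m s ∧ (∑ j, (a j).natAbs) = k ∧
    (Finset.univ.filter fun j => a j = 0).card = z}

/-- `N^red_𝓛(k, z)`: the number of `q`-reduced `μ ∈ 𝓛` (all `|aⱼ| < q`) with `‖μ‖₁ = k`
and exactly `z` zero coordinates. -/
noncomputable def NLred (q m : ℕ) (s : Fin m → ℤ) (k z : ℕ) : ℕ :=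
  Nat.card {a : Fin m → ℤ // a ∈ congLat q m s ∧ (∀ j, (a j).natAbs < q) ∧
    (∑ j, (a j).natAbs) = k ∧ (Finset.univ.filter fun j => a j = 0).card = z}

/-
Truncated division writes every `a ∈ ℤ^m` uniquely as `a = ν + q • d` with `ν = tmod a` reduced
and `d = tdiv a` sign-compatible with `ν` (`0 ≤ νⱼ dⱼ`). Then `‖a‖₁ = ‖ν‖₁ + q ‖d‖₁`,
`a ∈ 𝓛 ↔ ν ∈ 𝓛`, and `aⱼ = 0 ↔ νⱼ = dⱼ = 0`. Sort the vectors counted by `N_𝓛(k, z)` by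
`s' = Z(ν) - z` and `t = ‖d‖₁`; then `s' ≤ t ≤ α`, and it remains to count, for a fixed reduced
`ν` with `Z(ν) = z + s'`, the compatible `d` with `‖d‖₁ = t` vanishing at exactly `z` zeros of
`ν`: choose the `s'` zeros of `ν` where `d ≠ 0` and the signs of `d` there (`C(z+s', s') 2^s'`
ways), then distribute `t - s'` over these `s'` coordinates and the `m - z - s'` coordinates of
the support of `ν`, where the sign of `d` is forced (`C(t-s'+m-z-1, m-z-1)` ways).
-/

open Finset

namespace Int

theorem natAbs_add_mul_of_mul_nonneg {v d : ℤ} (q : ℕ) (h : 0 ≤ v * d) :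
    (v + q * d).natAbs = v.natAbs + q * d.natAbs := by
  rcases mul_nonneg_iff.mp h with ⟨hv, hd⟩ | ⟨hv, hd⟩
  · rw [natAbs_add_of_nonneg hv (by positivity), natAbs_mul, natAbs_natCast]
  · rw [← natAbs_neg, neg_add, ← mul_neg,
      natAbs_add_of_nonneg (by omega) (mul_nonneg (natCast_nonneg q) (by omega)),
      natAbs_mul, natAbs_natCast, natAbs_neg, natAbs_neg]

theorem add_mul_eq_zero_iff_of_mul_nonneg {v d : ℤ} {q : ℕ} (hq : 0 < q) (h : 0 ≤ v * d) :
    v + q * d = 0 ↔ v = 0 ∧ d = 0 := by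
  rw [← natAbs_eq_zero, natAbs_add_mul_of_mul_nonneg q h, ← natAbs_eq_zero, ← natAbs_eq_zero]
  simp [hq.ne']

theorem mul_nonneg_tmod_tdiv (x : ℤ) (q : ℕ) : 0 ≤ x.tmod q * x.tdiv q := by
  rcases le_total 0 x with hx | hx
  · exact mul_nonneg (tmod_nonneg _ hx) (Int.tdiv_nonneg hx (natCast_nonneg q))
  · have hx' : 0 ≤ -x := neg_nonneg.mpr hx
    have := mul_nonneg (tmod_nonneg (q : ℤ) hx') (Int.tdiv_nonneg hx' (natCast_nonneg q))
    rwa [neg_tmod, Int.neg_tdiv, neg_mul_neg] at this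

theorem natAbs_eq_natAbs_tmod_add_mul (x : ℤ) (q : ℕ) :
    x.natAbs = (x.tmod q).natAbs + q * (x.tdiv q).natAbs := by
  simp only [natAbs_tmod, natAbs_tdiv, natAbs_natCast]
  exact (Nat.mod_add_div _ _).symm

theorem natAbs_tmod_lt (x : ℤ) {q : ℕ} (hq : 0 < q) : (x.tmod q).natAbs < q := by
  rw [natAbs_tmod, natAbs_natCast]
  exact Nat.mod_lt _ hq

theorem tmod_tdiv_add_mul_of_mul_nonneg {v d : ℤ} {q : ℕ} (hv : v.natAbs < q) (h : 0 ≤ v * d) :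
    (v + q * d).tmod q = v ∧ (v + q * d).tdiv q = d := by
  have of_nonneg : ∀ v d : ℤ, v.natAbs < q → 0 ≤ v → 0 ≤ d →
      (v + q * d).tmod q = v ∧ (v + q * d).tdiv q = d := by
    intro v d hv hv0 hd
    have hvq : v < q := by omega
    have hx : 0 ≤ v + q * d := by positivity
    rw [tmod_eq_emod_of_nonneg hx, tdiv_eq_ediv_of_nonneg hx, add_mul_emod_self_left,
      emod_eq_of_lt hv0 hvq, add_mul_ediv_left _ _ (by omega), ediv_eq_zero_of_lt hv0 hvq, zero_add]
    exact ⟨rfl, rfl⟩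
  rcases mul_nonneg_iff.mp h with ⟨hv0, hd⟩ | ⟨hv0, hd⟩
  · exact of_nonneg v d hv hv0 hd
  · obtain ⟨hmod, hdiv⟩ := of_nonneg (-v) (-d) (by rwa [natAbs_neg]) (by omega) (by omega)
    rw [show v + q * d = -(-v + q * -d) by ring, neg_tmod, Int.neg_tdiv, hmod, hdiv]
    simp

theorem sign_mul_natAbs_of_mul_nonneg {v d : ℤ} (hv : v ≠ 0) (h : 0 ≤ v * d) :
    v.sign * d.natAbs = d := by
  rcases hv.lt_or_gt with hv | hv
  · have := nonpos_of_mul_nonneg_right h hv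
    rw [sign_eq_neg_one_of_neg hv]
    omega
  · have := nonneg_of_mul_nonneg_right h hv
    rw [sign_eq_one_of_pos hv]
    omega

end Int

theorem Nat.card_eq_sum_card_fiberwise {α β : Type*} [DecidableEq β] {P : α → Prop}
    (hP : {a | P a}.Finite) {f : α → β} {t : Finset β} (hf : ∀ a, P a → f a ∈ t) :
    Nat.card {a // P a} = ∑ b ∈ t, Nat.card {a // P a ∧ f a = b} := by
  have : Finite {a // P a} := hP.to_subtype
  have := Fintype.ofFinite {a // P a}
  classical
  rw [Nat.card_eq_fintype_card, ← Finset.card_univ,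
    Finset.card_eq_sum_card_fiberwise (f := fun a => f a.1) fun a _ => hf a.1 a.2]
  refine sum_congr rfl fun b _ => ?_
  rw [← Fintype.card_subtype, ← Nat.card_eq_fintype_card]
  exact Nat.card_congr (Equiv.subtypeSubtypeEquivSubtypeInter P (f · = b))

theorem Nat.card_eq_card_mul_of_card_fiber_eq {α β : Type*} {P : α → Prop} {Q : β → Prop}
    (hP : {a | P a}.Finite) (hQ : {b | Q b}.Finite) {f : α → β} (hf : ∀ a, P a → Q (f a))
    {c : ℕ} (hc : ∀ b, Q b → Nat.card {a // P a ∧ f a = b} = c) :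
    Nat.card {a // P a} = Nat.card {b // Q b} * c := by
  classical
  rw [Nat.card_eq_sum_card_fiberwise hP (t := hQ.toFinset) (by simpa using hf),
    sum_congr rfl (by simpa using hc), sum_const, smul_eq_mul, ← Nat.card_eq_card_finite_toFinset]
  rfl

theorem Finset.card_piAntidiag_nat {ι : Type*} [DecidableEq ι] (s : Finset ι) (n : ℕ) :
    #(s.piAntidiag n) = (#s).multichoose n := by
  rw [← card_finsuppAntidiag_nat_eq_multichoose, finsuppAntidiag, card_map, card_attach]

theorem Nat.multichoose_eq_choose_pred {n : ℕ} (hn : 0 < n) (r : ℕ) :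
    n.multichoose r = (r + n - 1).choose (n - 1) := by
  rw [Nat.multichoose_eq, show n + r - 1 = (n - 1) + r by omega,
    show r + n - 1 = (n - 1) + r by omega, Nat.choose_symm_add]

theorem finite_setOf_sum_natAbs_eq (ι : Type*) [Fintype ι] (k : ℕ) :
    {a : ι → ℤ | ∑ j, (a j).natAbs = k}.Finite := by
  refine (Set.Finite.pi fun _ => Set.finite_Icc (-(k : ℤ)) k).subset fun a ha j _ => ?_
  have : (a j).natAbs ≤ k :=
    ha ▸ single_le_sum (f := fun j => (a j).natAbs) (fun j _ => Nat.zero_le _) (mem_univ j)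
  simp only [Set.mem_Icc]
  omega

theorem card_filter_ne_zero_le_sum {ι : Type*} [Fintype ι] (g : ι → ℕ) :
    #{j | g j ≠ 0} ≤ ∑ j, g j := by
  rw [card_eq_sum_ones, sum_filter]
  exact sum_le_sum fun j _ => by split_ifs <;> omega

theorem card_filter_and_eq_add_card_filter_and_ne {ι α : Type*} [Fintype ι] [DecidableEq α]
    (p : ι → Prop) [DecidablePred p] (f : ι → α) (a : α) :
    #{j | p j ∧ f j = a} + #{j | p j ∧ f j ≠ a} = #{j | p j} := by
  rw [← filter_filter, ← filter_filter]
  exact card_filter_add_card_filter_not _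

section Compatible

variable {ι : Type*} [DecidableEq ι] (ν : ι → ℤ) (S : Finset ι)

def signedLift (σ : S → Bool) (g : ι → ℕ) (j : ι) : ℤ :=
  if h : j ∈ S then (bif σ ⟨j, h⟩ then 1 else -1) * ((g j + 1 : ℕ) : ℤ) else (ν j).sign * g j

variable {ν S}

theorem natAbs_signedLift {σ : S → Bool} {g : ι → ℕ} (hg : ∀ j, g j ≠ 0 → j ∈ S ∨ ν j ≠ 0)
    (j : ι) : (signedLift ν S σ g j).natAbs = g j + if j ∈ S then 1 else 0 := by
  unfold signedLift
  split_ifs with hj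
  · cases σ ⟨j, hj⟩ <;> simp <;> omega
  · by_cases hν : ν j = 0
    · have := hg j
      simp_all
    · simp [Int.natAbs_mul, Int.natAbs_sign_of_ne_zero hν]

variable [Fintype ι]

theorem sum_natAbs_signedLift {σ : S → Bool} {g : ι → ℕ}
    (hg : ∀ j, g j ≠ 0 → j ∈ S ∨ ν j ≠ 0) :
    ∑ j, (signedLift ν S σ g j).natAbs = ∑ j, g j + #S := by
  simp [natAbs_signedLift hg, sum_add_distrib]

/-- `d` is recorded by the signs of `d` on `S` and by `|dⱼ| - [j ∈ S]`. -/
noncomputable def compatibleSupportEquiv (hS : ∀ j ∈ S, ν j = 0) {t : ℕ} (ht : #S ≤ t) :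
    {d : ι → ℤ // (∀ j, 0 ≤ ν j * d j) ∧ ({j | ν j = 0 ∧ d j ≠ 0} : Finset ι) = S ∧
      ∑ j, (d j).natAbs = t} ≃
    (S → Bool) × (S ∪ ({j | ν j ≠ 0} : Finset ι)).piAntidiag (t - #S) where
  toFun d := (fun i => decide (0 < d.1 i), ⟨fun j => (d.1 j).natAbs - if j ∈ S then 1 else 0, by
    obtain ⟨d, hcomp, hsupp, hsum⟩ := d
    have hS' : ∀ j, j ∈ S ↔ ν j = 0 ∧ d j ≠ 0 := by simp [← hsupp]
    have hsub : ∀ j, (d j).natAbs - (if j ∈ S then 1 else 0) ≠ 0 →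
        j ∈ S ∪ ({j | ν j ≠ 0} : Finset ι) := fun j hj => by
      by_cases h : j ∈ S <;> simp_all
    have hcancel : ∀ j, (d j).natAbs - (if j ∈ S then 1 else 0) + (if j ∈ S then 1 else 0)
        = (d j).natAbs := fun j => by
      split_ifs with h
      · have := ((hS' j).1 h).2
        omega
      · rfl
    have := (sum_congr rfl fun j _ => hcancel j).trans hsum
    rw [sum_add_distrib, sum_boole, filter_mem_eq_inter, univ_inter, Nat.cast_id] at this
    rw [mem_piAntidiag, Fintype.sum_subset hsub]
    exact ⟨by omega, hsub⟩⟩)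
  invFun p := ⟨signedLift ν S p.1 p.2, by
    obtain ⟨σ, g, hg⟩ := p
    rw [mem_piAntidiag] at hg
    have hg' : ∀ j, g j ≠ 0 → j ∈ S ∨ ν j ≠ 0 := fun j h => by simpa using hg.2 j h
    refine ⟨fun j => ?_, ?_, ?_⟩
    · by_cases hj : j ∈ S
      · simp [hS j hj]
      · simp only [signedLift, hj, dite_false, ← mul_assoc, Int.mul_sign_self]
        positivity
    · ext j
      by_cases hj : j ∈ S
      · have h := natAbs_signedLift (σ := σ) hg' j
        simp only [mem_filter, mem_univ, true_and, hj, iff_true]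
        refine ⟨hS j hj, fun h0 => ?_⟩
        simp [h0, hj] at h
      · simp +contextual [signedLift, hj]
    · rw [sum_natAbs_signedLift hg', ← Fintype.sum_subset hg.2, hg.1]
      omega⟩
  left_inv d := by
    obtain ⟨d, hcomp, hsupp, -⟩ := d
    have hS' : ∀ j, j ∈ S ↔ ν j = 0 ∧ d j ≠ 0 := by simp [← hsupp]
    ext j
    simp only [signedLift]
    split_ifs with hj
    · rcases ((hS' j).1 hj).2.lt_or_gt with h | h
      · simp [show ¬0 < d j by omega]
        omega
      · simp [h]
        omega
    · by_cases hν : ν j = 0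
      · simp_all
      · simpa using Int.sign_mul_natAbs_of_mul_nonneg hν (hcomp j)
  right_inv p := by
    obtain ⟨σ, g, hg⟩ := p
    have hg' : ∀ j, g j ≠ 0 → j ∈ S ∨ ν j ≠ 0 := fun j h => by
      simpa using (mem_piAntidiag.1 hg).2 j h
    ext i
    · simp only [signedLift, i.2, dite_true]
      cases σ i <;> simp
    · simp [natAbs_signedLift hg']

theorem card_compatible_support_eq (hS : ∀ j ∈ S, ν j = 0) {t : ℕ} (ht : #S ≤ t) :
    Nat.card {d : ι → ℤ // (∀ j, 0 ≤ ν j * d j) ∧ ({j | ν j = 0 ∧ d j ≠ 0} : Finset ι) = S ∧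
      ∑ j, (d j).natAbs = t} = 2 ^ #S * (#S + #{j | ν j ≠ 0}).multichoose (t - #S) := by
  have hdisj : Disjoint S ({j | ν j ≠ 0} : Finset ι) :=
    disjoint_left.2 fun j hj => by simpa using hS j hj
  rw [Nat.card_congr (compatibleSupportEquiv hS ht), Nat.card_prod, Nat.card_fun,
    Nat.card_eq_finsetCard, Nat.card_eq_finsetCard, card_piAntidiag_nat,
    card_union_of_disjoint hdisj, Nat.card_eq_fintype_card (α := Bool), Fintype.card_bool]

theorem card_compatible_eq {z s' t : ℕ} (hA : #{j | ν j = 0} = z + s') (hst : s' ≤ t) :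
    Nat.card {d : ι → ℤ // (∀ j, 0 ≤ ν j * d j) ∧ #{j | ν j = 0 ∧ d j = 0} = z ∧
      ∑ j, (d j).natAbs = t}
      = (z + s').choose s' * (2 ^ s' * (Fintype.card ι - z).multichoose (t - s')) := by
  have hsplit (d : ι → ℤ) := card_filter_and_eq_add_card_filter_and_ne (ν · = 0) d 0
  have hsupp : #{j | ν j ≠ 0} = Fintype.card ι - (z + s') := by
    rw [← hA, filter_not, card_sdiff_of_subset (filter_subset _ _), card_univ]
  have hzs : z + s' ≤ Fintype.card ι := hA ▸ card_filter_le _ _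
  have hfree : Fintype.card ι - z = s' + #{j | ν j ≠ 0} := by omega
  rw [Nat.card_eq_card_mul_of_card_fiber_eq (Q := (· ∈ powersetCard s' {j | ν j = 0}))
    (f := fun d => ({j | ν j = 0 ∧ d j ≠ 0} : Finset ι))
    ((finite_setOf_sum_natAbs_eq ι t).subset fun d hd => hd.2.2) (finite_toSet _)]
  · rw [Nat.card_eq_finsetCard, card_powersetCard, hA]
  · intro d ⟨_, hz, _⟩
    rw [mem_powersetCard]
    refine ⟨fun j hj => by simp_all, ?_⟩
    have := hsplit d
    omega
  · intro S hS
    rw [mem_powersetCard] at hS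
    rw [hfree, ← hS.2,
      ← card_compatible_support_eq (fun j hj => by simpa using hS.1 hj) (hS.2 ▸ hst)]
    refine Nat.card_congr (Equiv.subtypeEquivRight fun d => ?_)
    have := hsplit d
    constructor
    · rintro ⟨⟨hcomp, -, hsum⟩, hsupp⟩
      exact ⟨hcomp, hsupp, hsum⟩
    · rintro ⟨hcomp, hsupp, hsum⟩
      refine ⟨⟨hcomp, ?_, hsum⟩, hsupp⟩
      rw [hsupp] at this
      omega

end Compatible

section Lifts

variable {ι : Type*} [Fintype ι]

theorem sum_natAbs_eq_sum_natAbs_tmod_add_mul (a : ι → ℤ) (q : ℕ) :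
    ∑ j, (a j).natAbs = ∑ j, ((a j).tmod q).natAbs + q * ∑ j, ((a j).tdiv q).natAbs := by
  simp only [mul_sum, ← sum_add_distrib, ← Int.natAbs_eq_natAbs_tmod_add_mul]

theorem card_eq_zero_le_card_tmod_eq_zero (a : ι → ℤ) (q : ℕ) :
    #{j | a j = 0} ≤ #{j | (a j).tmod q = 0} :=
  card_le_card fun j => by simp +contextual

theorem card_tmod_eq_zero_le (a : ι → ℤ) (q : ℕ) :
    #{j | (a j).tmod q = 0} ≤ #{j | a j = 0} + ∑ j, ((a j).tdiv q).natAbs := by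
  classical
  calc #{j | (a j).tmod q = 0}
      ≤ #(({j | a j = 0} : Finset ι) ∪ ({j | (a j).tdiv q ≠ 0} : Finset ι)) :=
        card_le_card fun j hj => by
        by_contra h
        simp only [mem_union, mem_filter, mem_univ, true_and, not_or, not_not] at hj h
        exact h.1 (by rw [← Int.tmod_add_mul_tdiv (a j) q, hj, h.2]; simp)
    _ ≤ #{j | a j = 0} + #{j | (a j).tdiv q ≠ 0} := card_union_le _ _
    _ ≤ #{j | a j = 0} + ∑ j, ((a j).tdiv q).natAbs := by
        have := card_filter_ne_zero_le_sum fun j => ((a j).tdiv q).natAbs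
        simp only [Int.natAbs_ne_zero] at this
        omega

theorem sum_natAbs_tdiv_le {q α r₀ : ℕ} {a : ι → ℤ} (ha : ∑ j, (a j).natAbs = α * q + r₀)
    (hr₀ : r₀ < q) : ∑ j, ((a j).tdiv q).natAbs ≤ α := by
  have hqT : q * ∑ j, ((a j).tdiv q).natAbs ≤ α * q + r₀ := by
    rw [← ha, sum_natAbs_eq_sum_natAbs_tmod_add_mul a q]
    exact Nat.le_add_left _ _
  have : α * q + r₀ < q * (α + 1) := by rw [mul_add, mul_one, mul_comm]; omega
  exact Nat.le_of_lt_succ (Nat.lt_of_mul_lt_mul_left (hqT.trans_lt this))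

theorem card_lifts_eq_card_compatible {q : ℕ} (hq : 0 < q) {ν : ι → ℤ}
    (hν : ∀ j, (ν j).natAbs < q) (z t : ℕ) :
    Nat.card {a : ι → ℤ // (∀ j, (a j).tmod q = ν j) ∧ #{j | a j = 0} = z ∧
      ∑ j, ((a j).tdiv q).natAbs = t} =
    Nat.card {d : ι → ℤ // (∀ j, 0 ≤ ν j * d j) ∧ #{j | ν j = 0 ∧ d j = 0} = z ∧
      ∑ j, (d j).natAbs = t} := by
  refine Nat.card_congr
    { toFun := fun a => ⟨fun j => (a.1 j).tdiv q,
        fun j => a.2.1 j ▸ Int.mul_nonneg_tmod_tdiv _ _, ?_, a.2.2.2⟩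
      invFun := fun d => ⟨fun j => ν j + q * d.1 j,
        fun j => (Int.tmod_tdiv_add_mul_of_mul_nonneg (hν j) (d.2.1 j)).1, ?_, ?_⟩
      left_inv := fun a => Subtype.ext <| funext fun j => by
        simp only [← a.2.1 j, Int.tmod_add_mul_tdiv]
      right_inv := fun d => Subtype.ext <| funext fun j =>
        (Int.tmod_tdiv_add_mul_of_mul_nonneg (hν j) (d.2.1 j)).2 }
  · obtain ⟨a, hmod, hz, -⟩ := a
    refine Eq.trans (congrArg card (filter_congr fun j _ => ?_)) hz
    rw [← hmod j, ← Int.add_mul_eq_zero_iff_of_mul_nonneg hq (Int.mul_nonneg_tmod_tdiv _ _),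
      Int.tmod_add_mul_tdiv]
  · obtain ⟨d, hcomp, hz, -⟩ := d
    exact Eq.trans (congrArg card (filter_congr fun j _ =>
      Int.add_mul_eq_zero_iff_of_mul_nonneg hq (hcomp j))) hz
  · obtain ⟨d, hcomp, -, ht⟩ := d
    exact Eq.trans (sum_congr rfl fun j _ => by
      rw [(Int.tmod_tdiv_add_mul_of_mul_nonneg (hν j) (hcomp j)).2]) ht

end Lifts

theorem tmod_mem_congLat_iff {q m : ℕ} {s : Fin m → ℤ} {a : Fin m → ℤ} :
    (fun j => (a j).tmod q) ∈ congLat q m s ↔ a ∈ congLat q m s := by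
  have : ∑ j, a j * s j = ∑ j, (a j).tmod q * s j + q * ∑ j, (a j).tdiv q * s j := by
    simp only [mul_sum, ← sum_add_distrib, ← mul_assoc, ← add_mul, Int.tmod_add_mul_tdiv]
  simp only [congLat, Set.mem_ofPred_eq, this, dvd_add_left (dvd_mul_right _ _)]

/- The `(s', t)`-layer of `N_𝓛(k, z)` consists of the vectors `a` counted there with
`Z(tmod a) - z = s'` and `‖tdiv a‖₁ = t`. -/

section Fiber

variable {q m : ℕ} {s : Fin m → ℤ} {k z s' t : ℕ}

theorem tmod_mem_reduced_of_mem_layer (hq : 0 < q) {a : Fin m → ℤ}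
    (ha : ((a ∈ congLat q m s ∧ ∑ j, (a j).natAbs = k ∧ #{j | a j = 0} = z) ∧
      #{j | (a j).tmod q = 0} - z = s') ∧ ∑ j, ((a j).tdiv q).natAbs = t) :
    (fun j => (a j).tmod q) ∈ congLat q m s ∧ (∀ j, ((a j).tmod q).natAbs < q) ∧
      ∑ j, ((a j).tmod q).natAbs = k - t * q ∧ #{j | (a j).tmod q = 0} = z + s' := by
  obtain ⟨⟨⟨hL, hk, hz⟩, hs'⟩, ht⟩ := ha
  have hsum := sum_natAbs_eq_sum_natAbs_tmod_add_mul a q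
  have := card_eq_zero_le_card_tmod_eq_zero a q
  rw [hk, ht, mul_comm] at hsum
  exact ⟨tmod_mem_congLat_iff.2 hL, fun j => Int.natAbs_tmod_lt _ hq, by omega, by omega⟩

theorem card_layer_fiber_eq (hq : 0 < q) (hzm : z < m) (hst : s' ≤ t) (htq : t * q ≤ k)
    {ν : Fin m → ℤ} (hν : ν ∈ congLat q m s ∧ (∀ j, (ν j).natAbs < q) ∧
      ∑ j, (ν j).natAbs = k - t * q ∧ #{j | ν j = 0} = z + s') :
    Nat.card {a // (((a ∈ congLat q m s ∧ ∑ j, (a j).natAbs = k ∧ #{j | a j = 0} = z) ∧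
      #{j | (a j).tmod q = 0} - z = s') ∧ ∑ j, ((a j).tdiv q).natAbs = t) ∧
        (fun j => (a j).tmod q) = ν} =
      (z + s').choose s' * (2 ^ s' * (t - s' + m - z - 1).choose (m - z - 1)) := by
  obtain ⟨hL, hred, hsum, hzero⟩ := hν
  rw [show t - s' + m - z - 1 = t - s' + (m - z) - 1 by omega,
    ← Nat.multichoose_eq_choose_pred (by omega), show m - z = Fintype.card (Fin m) - z by simp,
    ← card_compatible_eq hzero hst, ← card_lifts_eq_card_compatible hq hred]
  refine Nat.card_congr (Equiv.subtypeEquivRight fun a => ?_)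
  rw [funext_iff]
  constructor
  · rintro ⟨⟨⟨⟨-, -, hz⟩, -⟩, ht⟩, hmod⟩
    exact ⟨hmod, hz, ht⟩
  · rintro ⟨hmod, hz, ht⟩
    have hsplit := sum_natAbs_eq_sum_natAbs_tmod_add_mul a q
    simp only [hmod, hsum, ht, mul_comm q t] at hsplit
    refine ⟨⟨⟨⟨tmod_mem_congLat_iff.1 (funext hmod ▸ hL), by omega, hz⟩, ?_⟩, ht⟩, hmod⟩
    simp only [hmod, hzero]
    omega

end Fiber

/-- The counting formula expressing `N_𝓛(k,z)` in terms of the reduced counts. -/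
theorem NL_eq_sum_NLred (q m : ℕ) (hq : 1 ≤ q) (hm : 1 ≤ m) (s : Fin m → ℤ)
    (k α r₀ : ℕ) (hk : k = α * q + r₀) (hr₀ : r₀ < q) (z : ℕ) (hz : z ≤ m - 1) :
    NL q m s k z =
      ∑ s' ∈ Finset.range (m - z + 1), 2 ^ s' * (z + s').choose s' *
        ∑ t ∈ Finset.Icc s' α,
          (t - s' + m - z - 1).choose (m - z - 1) * NLred q m s (k - t * q) (z + s') := by
  have hfin := finite_setOf_sum_natAbs_eq (Fin m)
  rw [NL, Nat.card_eq_sum_card_fiberwise ?fin (t := range (m - z + 1))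
    (f := fun a => #{j | (a j).tmod q = 0} - z) fun a _ => ?range]
  case fin => exact (hfin k).subset fun a ha => ha.2.1
  case range =>
    exact mem_range.2 (Nat.lt_succ_of_le (Nat.sub_le_sub_right
      ((card_filter_le _ _).trans_eq (card_fin m)) z))
  refine sum_congr rfl fun s' _ => ?_
  rw [Nat.card_eq_sum_card_fiberwise ?fin (t := Icc s' α)
    (f := fun a => ∑ j, ((a j).tdiv q).natAbs) fun a ha => ?Icc, mul_sum]
  case fin => exact (hfin k).subset fun a ha => ha.1.2.1
  case Icc =>
    obtain ⟨⟨-, hka, hza⟩, hs'⟩ := ha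
    have := card_tmod_eq_zero_le a q
    exact mem_Icc.2 ⟨by omega, sum_natAbs_tdiv_le (hka.trans hk) hr₀⟩
  refine sum_congr rfl fun t ht => ?_
  rw [mem_Icc] at ht
  rw [Nat.card_eq_card_mul_of_card_fiber_eq ?fin ((hfin (k - t * q)).subset fun ν hν => hν.2.2.1)
    (f := fun a j => (a j).tmod q) (fun a ha => tmod_mem_reduced_of_mem_layer hq ha)
    fun ν hν => card_layer_fiber_eq hq (by omega) ht.1
      (hk ▸ le_add_right (Nat.mul_le_mul_right q ht.2)) hν]
  case fin => exact (hfin k).subset fun a ha => ha.1.1.2.1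
  unfold NLred
  ring
end

section
/- Let r, t be positive integers, and let 𝓛 = 𝓛(r²t; 1, 1+rt, 1+3rt) and 𝓛' = 𝓛(r²t; 1, 1−rt, 1−3rt) be the associated congruence lattices in ℤ³. Then for every k ∈ ℕ and every z ∈ {1, 2, 3}, N_𝓛(k,z) = N_{𝓛'}(k,z). -/
/-!
Modulo `q = r²t` the number `u = rt` satisfies `u² ≡ 0`, so `1 - cu` is the inverse of `1 + cu`:
the weights of `𝓛'` are the inverses of those of `𝓛`. If `μ` vanishes outside two coordinates
`i, j`, then `aᵢsᵢ⁻¹ + aⱼsⱼ⁻¹ ≡ 0` iff (multiplying by `sᵢsⱼ`) `aⱼsᵢ + aᵢsⱼ ≡ 0`, so swapping these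
two coordinates carries `𝓛'` onto `𝓛`; it preserves `‖μ‖₁` and `Z(μ)`. Swapping the two nonzero
coordinates of the vectors with exactly one zero, and fixing those with two or three zeros, is
therefore an involution matching the vectors with `Z(μ) = z > 0` of the two lattices.
-/

theorem mul_add_mul_eq_zero_iff_of_mul_eq_one {R : Type*} [CommRing R] {x x' y y' : R}
    (hx : x * x' = 1) (hy : y * y' = 1) (a b : R) :
    b * x + a * y = 0 ↔ a * x' + b * y' = 0 := by
  constructor <;> intro h
  · calc a * x' + b * y' = (b * x + a * y) * (x' * y') := by
          linear_combination (-(a * x') * hy) - b * y' * hx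
      _ = 0 := by rw [h, zero_mul]
  · calc b * x + a * y = (a * x' + b * y') * (x * y) := by
          linear_combination (-(a * y) * hx) - b * x * hy
      _ = 0 := by rw [h, zero_mul]

theorem one_add_mul_mul_one_sub_mul_modEq_one {q u : ℤ} (hu : q ∣ u ^ 2) (c : ℤ) :
    (1 + c * u) * (1 - c * u) ≡ 1 [ZMOD q] :=
  Int.modEq_iff_dvd.mpr <| by
    rw [show 1 - (1 + c * u) * (1 - c * u) = c ^ 2 * u ^ 2 by ring]
    exact hu.mul_left _

theorem ZMod.intCast_mul_intCast_eq_one {q : ℕ} {x y : ℤ} (h : x * y ≡ 1 [ZMOD q]) :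
    (x : ZMod q) * y = 1 := by
  exact_mod_cast (ZMod.intCast_eq_intCast_iff _ _ _).mpr h

namespace congLat

variable {q m : ℕ} {s s' : Fin m → ℤ} {a : Fin m → ℤ}

theorem mem_iff_zmod : a ∈ congLat q m s ↔ ∑ j, (a j : ZMod q) * s j = 0 := by
  change (q : ℤ) ∣ _ ↔ _
  rw [← ZMod.intCast_zmod_eq_zero_iff_dvd]
  push_cast
  rfl

theorem mem_iff_of_forall_ne_eq_zero (hs : ∀ j, s j * s' j ≡ 1 [ZMOD q]) {i : Fin m}
    (ha : ∀ j, j ≠ i → a j = 0) : a ∈ congLat q m s ↔ a ∈ congLat q m s' := by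
  have hsum : ∀ w : Fin m → ℤ, ∑ j, (a j : ZMod q) * w j = a i * w i := fun w =>
    Fintype.sum_eq_single i fun j hj => by rw [ha j hj, Int.cast_zero, zero_mul]
  have hi := ZMod.intCast_mul_intCast_eq_one (hs i)
  rw [mem_iff_zmod, mem_iff_zmod, hsum, hsum, (IsUnit.of_mul_eq_one _ hi).mul_left_eq_zero,
    (IsUnit.of_mul_eq_one_right _ hi).mul_left_eq_zero]

theorem comp_swap_mem_iff (hs : ∀ j, s j * s' j ≡ 1 [ZMOD q]) {i j : Fin m} (hij : i ≠ j)
    (ha : ∀ l, l ≠ i ∧ l ≠ j → a l = 0) :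
    a ∘ Equiv.swap i j ∈ congLat q m s ↔ a ∈ congLat q m s' := by
  have hsum : ∀ (b : Fin m → ℤ) (w : Fin m → ℤ), (∀ l, l ≠ i ∧ l ≠ j → b l = 0) →
      ∑ l, (b l : ZMod q) * w l = b i * w i + b j * w j := fun b w hb =>
    Fintype.sum_eq_add i j hij fun l hl => by rw [hb l hl, Int.cast_zero, zero_mul]
  have hswap : ∀ l, l ≠ i ∧ l ≠ j → (a ∘ Equiv.swap i j) l = 0 := fun l hl => by
    rw [Function.comp_apply, Equiv.swap_apply_of_ne_of_ne hl.1 hl.2, ha l hl]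
  rw [mem_iff_zmod, mem_iff_zmod, hsum _ _ hswap, hsum _ _ ha]
  simpa using mul_add_mul_eq_zero_iff_of_mul_eq_one (ZMod.intCast_mul_intCast_eq_one (hs i))
    (ZMod.intCast_mul_intCast_eq_one (hs j)) (a i) (a j)

end congLat

def swapAroundZero (a : Fin 3 → ℤ) : Fin 3 → ℤ :=
  if a 0 = 0 ∧ a 1 ≠ 0 ∧ a 2 ≠ 0 then a ∘ Equiv.swap 1 2
  else if a 1 = 0 ∧ a 0 ≠ 0 ∧ a 2 ≠ 0 then a ∘ Equiv.swap 0 2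
  else if a 2 = 0 ∧ a 0 ≠ 0 ∧ a 1 ≠ 0 then a ∘ Equiv.swap 0 1
  else a

theorem swapAroundZero_involutive : Function.Involutive swapAroundZero := by
  intro a
  unfold swapAroundZero
  by_cases h0 : a 0 = 0 <;> by_cases h1 : a 1 = 0 <;> by_cases h2 : a 2 = 0 <;>
    simp [h0, h1, h2, Function.comp_def, Equiv.swap_apply_of_ne_of_ne, Equiv.swap_apply_self]

theorem exists_perm_swapAroundZero (a : Fin 3 → ℤ) :
    ∃ σ : Equiv.Perm (Fin 3), swapAroundZero a = a ∘ σ := by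
  unfold swapAroundZero
  split_ifs
  exacts [⟨_, rfl⟩, ⟨_, rfl⟩, ⟨_, rfl⟩, ⟨1, rfl⟩]

theorem Finset.card_filter_univ_comp_perm {ι : Type*} [Fintype ι] (p : ι → Prop)
    [DecidablePred p] (σ : Equiv.Perm ι) :
    (Finset.univ.filter fun j => p (σ j)).card = (Finset.univ.filter p).card := by
  simp only [Finset.card_filter]
  exact Equiv.sum_comp σ fun j => if p j then 1 else 0

theorem swapAroundZero_mem_congLat_iff {q : ℕ} {s s' : Fin 3 → ℤ}
    (hs : ∀ j, s j * s' j ≡ 1 [ZMOD q]) {a : Fin 3 → ℤ} (ha : ∃ j, a j = 0) :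
    swapAroundZero a ∈ congLat q 3 s ↔ a ∈ congLat q 3 s' := by
  unfold swapAroundZero
  split_ifs with h0 h1 h2
  · exact congLat.comp_swap_mem_iff hs (by decide) fun l hl => by
      fin_cases l <;> simp_all
  · exact congLat.comp_swap_mem_iff hs (by decide) fun l hl => by
      fin_cases l <;> simp_all
  · exact congLat.comp_swap_mem_iff hs (by decide) fun l hl => by
      fin_cases l <;> simp_all
  · obtain ⟨i, hi⟩ : ∃ i, ∀ j, j ≠ i → a j = 0 := by
      obtain ⟨j, hj⟩ := ha
      fin_cases j <;> by_cases e1 : a 1 = 0 <;> by_cases e2 : a 2 = 0 <;>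
        simp_all [Fin.exists_fin_succ, Fin.forall_fin_succ]
    exact congLat.mem_iff_of_forall_ne_eq_zero hs hi

theorem sum_natAbs_swapAroundZero (a : Fin 3 → ℤ) :
    ∑ j, (swapAroundZero a j).natAbs = ∑ j, (a j).natAbs := by
  obtain ⟨σ, hσ⟩ := exists_perm_swapAroundZero a
  rw [hσ]
  exact Equiv.sum_comp σ fun j => (a j).natAbs

theorem card_filter_swapAroundZero_eq_zero (a : Fin 3 → ℤ) :
    (Finset.univ.filter fun j => swapAroundZero a j = 0).card =
      (Finset.univ.filter fun j => a j = 0).card := by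
  obtain ⟨σ, hσ⟩ := exists_perm_swapAroundZero a
  rw [hσ]
  exact Finset.card_filter_univ_comp_perm (fun j => a j = 0) σ

theorem NL_three_eq_of_mul_modEq_one {q : ℕ} {s s' : Fin 3 → ℤ}
    (hs : ∀ j, s j * s' j ≡ 1 [ZMOD q]) (k : ℕ) {z : ℕ} (hz : z ≠ 0) :
    NL q 3 s k z = NL q 3 s' k z := by
  have hs' : ∀ j, s' j * s j ≡ 1 [ZMOD q] := fun j => by rw [mul_comm]; exact hs j
  refine Nat.card_congr <| (swapAroundZero_involutive.toPerm _).subtypeEquiv fun a => ?_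
  rw [Function.Involutive.coe_toPerm, sum_natAbs_swapAroundZero,
    card_filter_swapAroundZero_eq_zero]
  refine and_congr_left fun ⟨_, hzeros⟩ => ?_
  obtain ⟨j, hj⟩ := Finset.card_pos.mp (Nat.pos_of_ne_zero (hzeros ▸ hz))
  exact (swapAroundZero_mem_congLat_iff hs' ⟨j, (Finset.mem_filter.mp hj).2⟩).symm

theorem NL_eq_of_pos_zeros_general (r t : ℕ) (k z : ℕ)
    (hz : z = 1 ∨ z = 2 ∨ z = 3) :
    NL (r ^ 2 * t) 3 ![(1 : ℤ), 1 + (r : ℤ) * t, 1 + 3 * (r : ℤ) * t] k z =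
      NL (r ^ 2 * t) 3 ![(1 : ℤ), 1 - (r : ℤ) * t, 1 - 3 * (r : ℤ) * t] k z := by
  have hu : ((r ^ 2 * t : ℕ) : ℤ) ∣ ((r : ℤ) * t) ^ 2 := ⟨t, by push_cast; ring⟩
  refine NL_three_eq_of_mul_modEq_one (fun j => ?_) k (by omega)
  fin_cases j
  · simp
  · simpa using one_add_mul_mul_one_sub_mul_modEq_one hu 1
  · simpa [mul_assoc] using one_add_mul_mul_one_sub_mul_modEq_one hu 3

/-- For `𝓛 = 𝓛(r²t; 1, 1+rt, 1+3rt)` and `𝓛' = 𝓛(r²t; 1, 1-rt, 1-3rt)` one has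
`N_𝓛(k, z) = N_𝓛'(k, z)` for every `k` and every `z ∈ {1, 2, 3}`. -/
theorem NL_eq_of_pos_zeros (r t : ℕ) (hr : 1 ≤ r) (ht : 1 ≤ t) (k z : ℕ)
    (hz : z = 1 ∨ z = 2 ∨ z = 3) :
    NL (r ^ 2 * t) 3 ![(1 : ℤ), 1 + (r : ℤ) * t, 1 + 3 * (r : ℤ) * t] k z =
      NL (r ^ 2 * t) 3 ![(1 : ℤ), 1 - (r : ℤ) * t, 1 - 3 * (r : ℤ) * t] k z :=
  NL_eq_of_pos_zeros_general r t k z hz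
end

section
/- Let r, t be positive integers, and let 𝓛 = 𝓛(r²t; 1, 1+rt, 1+3rt) and 𝓛' = 𝓛(r²t; 1, 1−rt, 1−3rt). Then for all integers a, b, c: (a,b,0) ∈ 𝓛 if and only if (b,a,0) ∈ 𝓛'; (a,0,c) ∈ 𝓛 if and only if (c,0,a) ∈ 𝓛'; and (0,b,c) ∈ 𝓛 if and only if (0,c,b) ∈ 𝓛'. -/
theorem mem_congLat_iff_cast_eq_zero (q m : ℕ) (s a : Fin m → ℤ) :
    a ∈ congLat q m s ↔ ((∑ j, a j * s j : ℤ) : ZMod q) = 0 :=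
  (ZMod.intCast_zmod_eq_zero_iff_dvd _ q).symm

theorem one_add_mul_add_one_add_mul_eq_zero_iff {R : Type*} [CommRing R] {u : R}
    (hu : u ^ 2 = 0) (j k x y : R) :
    (1 + j * u) * x + (1 + k * u) * y = 0 ↔ (1 - k * u) * x + (1 - j * u) * y = 0 := by
  have hw : IsUnit (1 - (j + k) * u) :=
    .of_mul_eq_one (1 + (j + k) * u) (by linear_combination -(j + k) ^ 2 * hu)
  have hmul : (1 - (j + k) * u) * ((1 + j * u) * x + (1 + k * u) * y) =
      (1 - k * u) * x + (1 - j * u) * y := by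
    linear_combination -(j * (j + k) * x + k * (j + k) * y) * hu
  rw [← hw.mul_right_eq_zero, hmul]

theorem mem_congLat_swap_iff_general (r t : ℕ) (a b c : ℤ) :
    (![a, b, 0] ∈ congLat (r ^ 2 * t) 3 ![(1 : ℤ), 1 + (r : ℤ) * t, 1 + 3 * (r : ℤ) * t] ↔
      ![b, a, 0] ∈ congLat (r ^ 2 * t) 3 ![(1 : ℤ), 1 - (r : ℤ) * t, 1 - 3 * (r : ℤ) * t]) ∧
    (![a, 0, c] ∈ congLat (r ^ 2 * t) 3 ![(1 : ℤ), 1 + (r : ℤ) * t, 1 + 3 * (r : ℤ) * t] ↔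
      ![c, 0, a] ∈ congLat (r ^ 2 * t) 3 ![(1 : ℤ), 1 - (r : ℤ) * t, 1 - 3 * (r : ℤ) * t]) ∧
    (![0, b, c] ∈ congLat (r ^ 2 * t) 3 ![(1 : ℤ), 1 + (r : ℤ) * t, 1 + 3 * (r : ℤ) * t] ↔
      ![0, c, b] ∈ congLat (r ^ 2 * t) 3 ![(1 : ℤ), 1 - (r : ℤ) * t, 1 - 3 * (r : ℤ) * t]) := by
  have hu : ((r : ZMod (r ^ 2 * t)) * t) ^ 2 = 0 := by
    rw [show ((r : ZMod (r ^ 2 * t)) * t) ^ 2 = ((r ^ 2 * t * t : ℕ) : ZMod (r ^ 2 * t)) by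
      push_cast; ring, Nat.cast_mul, ZMod.natCast_self, zero_mul]
  simp only [mem_congLat_iff_cast_eq_zero, Fin.sum_univ_three, Matrix.cons_val_zero,
    Matrix.cons_val_one, Matrix.cons_val_two, Matrix.head_cons, Matrix.tail_cons]
  push_cast
  refine ⟨?_, ?_, ?_⟩
  · convert one_add_mul_add_one_add_mul_eq_zero_iff hu 0 1 a b using 2 <;> ring
  · convert one_add_mul_add_one_add_mul_eq_zero_iff hu 0 3 a c using 2 <;> ring
  · convert one_add_mul_add_one_add_mul_eq_zero_iff hu 1 3 b c using 2 <;> ring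

/-- The bijections between elements with one zero coordinate of
`𝓛 = 𝓛(r²t; 1, 1+rt, 1+3rt)` and `𝓛' = 𝓛(r²t; 1, 1-rt, 1-3rt)`. -/
theorem mem_congLat_swap_iff (r t : ℕ) (hr : 1 ≤ r) (ht : 1 ≤ t) (a b c : ℤ) :
    (![a, b, 0] ∈ congLat (r ^ 2 * t) 3 ![(1 : ℤ), 1 + (r : ℤ) * t, 1 + 3 * (r : ℤ) * t] ↔
      ![b, a, 0] ∈ congLat (r ^ 2 * t) 3 ![(1 : ℤ), 1 - (r : ℤ) * t, 1 - 3 * (r : ℤ) * t]) ∧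
    (![a, 0, c] ∈ congLat (r ^ 2 * t) 3 ![(1 : ℤ), 1 + (r : ℤ) * t, 1 + 3 * (r : ℤ) * t] ↔
      ![c, 0, a] ∈ congLat (r ^ 2 * t) 3 ![(1 : ℤ), 1 - (r : ℤ) * t, 1 - 3 * (r : ℤ) * t]) ∧
    (![0, b, c] ∈ congLat (r ^ 2 * t) 3 ![(1 : ℤ), 1 + (r : ℤ) * t, 1 + 3 * (r : ℤ) * t] ↔
      ![0, c, b] ∈ congLat (r ^ 2 * t) 3 ![(1 : ℤ), 1 - (r : ℤ) * t, 1 - 3 * (r : ℤ) * t]) :=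
  mem_congLat_swap_iff_general r t a b c
end

section
/- Let r be a positive integer not divisible by 3 and let ξ ∈ ℤ. Define A(r,ξ) = #{(x,y) ∈ ℤ² : 0 < y < x < r and x + 2y ≡ ξ (mod r)}. If r is odd, then A(r,ξ) = (r−3)/2 if r does not divide ξ, and A(r,ξ) = (r−1)/2 if r divides ξ. If r is even, then A(r,ξ) = r/2 − 1 if ξ is odd, A(r,ξ) = r/2 − 2 if ξ is even and r does not divide ξ, and A(r,ξ) = r/2 − 1 if r divides ξ. -/
/-!
For each `y` the congruence determines `x` as `(ξ - 2y) mod r`, so `A(r, ξ)` counts the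
`0 < y < r` with `y < (c - 2y) mod r`, where `c = ξ mod r`. According as `(c - 2y) mod r` is
`c - 2y + k r` for `k = 0, 1, 2`, the condition becomes `3y < c + k r`, so the admissible `y`
form three intervals `(max 0 ⌊(c + (k - 1) r) / 2⌋, ⌊(c + k r - 1) / 3⌋]`. As `3 ∤ r`, the numbers
`c + k r - 1` run over all residues mod `3`, so the three upper ends add up to `c + r - 2`
(Hermite's identity); the lower ends depend only on the parities of `c` and `r`. For `c = 0`
the first interval is empty rather than of length `-1`, which accounts for the case `r ∣ ξ`.
-/

open Finset

noncomputable def Acount (r : ℕ) (ξ : ℤ) : ℕ :=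
  Nat.card {p : ℤ × ℤ // 0 < p.2 ∧ p.2 < p.1 ∧ p.1 < (r : ℤ) ∧
    p.1 + 2 * p.2 ≡ ξ [ZMOD (r : ℤ)]}

theorem Acount_eq_card_filter (r : ℕ) (ξ : ℤ) :
    Acount r ξ = #{y ∈ Ioo 0 (r : ℤ) | y < (ξ % r - 2 * y) % r} := by
  have hset : {p : ℤ × ℤ | 0 < p.2 ∧ p.2 < p.1 ∧ p.1 < (r : ℤ) ∧
      p.1 + 2 * p.2 ≡ ξ [ZMOD (r : ℤ)]} =
      (({y ∈ Ioo 0 (r : ℤ) | y < (ξ % r - 2 * y) % r}).image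
        fun y => ((ξ % r - 2 * y) % r, y) : Set (ℤ × ℤ)) := by
    ext ⟨x, y⟩
    have hsub (z : ℤ) : (ξ % r - 2 * z) % r = (ξ - 2 * z) % r := by
      rw [Int.sub_emod, Int.emod_emod, ← Int.sub_emod]
    simp only [Set.mem_ofPred_eq, coe_image, coe_filter, mem_Ioo, Set.mem_image,
      Prod.mk.injEq, hsub]
    constructor
    · rintro ⟨hy, hyx, hxr, hmod⟩
      have hx : x = (ξ - 2 * y) % r :=
        (Int.emod_eq_of_lt (by omega) hxr).symm.trans
          (by simpa using hmod.sub_right (2 * y) : x ≡ ξ - 2 * y [ZMOD r])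
      exact ⟨y, ⟨⟨hy, by omega⟩, by omega⟩, hx.symm, rfl⟩
    · rintro ⟨y, ⟨⟨hy, hyr⟩, hyx⟩, rfl, rfl⟩
      refine ⟨hy, hyx, Int.emod_lt_of_pos _ (by omega), ?_⟩
      simpa using (Int.mod_modEq (ξ - 2 * y) r).add_right (2 * y)
  rw [Acount, ← Set.coe_ofPred, Nat.card_coe_set_eq, hset, Set.ncard_coe_finset,
    card_image_of_injective _ fun _ _ h => (Prod.mk.inj h).2]

theorem lt_sub_two_mul_emod_iff {r c y : ℤ} (hc0 : 0 ≤ c) (hcr : c < r) (hy0 : 0 < y)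
    (hyr : y < r) :
    y < (c - 2 * y) % r ↔
      y ≤ (c - 1) / 3 ∨ (c / 2 < y ∧ y ≤ (c + r - 1) / 3) ∨
        ((c + r) / 2 < y ∧ y ≤ (c + 2 * r - 1) / 3) := by
  have hdiv := Int.mul_ediv_add_emod (c - 2 * y) r
  have hm0 := Int.emod_nonneg (c - 2 * y) (by omega : r ≠ 0)
  have hmr := Int.emod_lt_of_pos (c - 2 * y) (by omega : 0 < r)
  set k := (c - 2 * y) / r
  have hk_lo : -3 < k := by
    by_contra h
    nlinarith
  have hk_hi : k < 1 := by
    by_contra h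
    nlinarith
  interval_cases k <;> omega

theorem card_filter_lt_sub_two_mul_emod {r c : ℤ} (hc0 : 0 ≤ c) (hcr : c < r) :
    #{y ∈ Ioo 0 r | y < (c - 2 * y) % r} =
      ((c - 1) / 3).toNat + ((c + r - 1) / 3 - c / 2).toNat +
        ((c + 2 * r - 1) / 3 - (c + r) / 2).toNat := by
  have hunion : {y ∈ Ioo 0 r | y < (c - 2 * y) % r} =
      (Ioc 0 ((c - 1) / 3) ∪ Ioc (c / 2) ((c + r - 1) / 3)) ∪
        Ioc ((c + r) / 2) ((c + 2 * r - 1) / 3) := by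
    ext y
    simp only [mem_filter, mem_Ioo, mem_union, mem_Ioc]
    constructor
    · rintro ⟨⟨hy0, hyr⟩, hy⟩
      have := (lt_sub_two_mul_emod_iff hc0 hcr hy0 hyr).mp hy
      omega
    · intro hy
      have hy0 : 0 < y := by omega
      have hyr : y < r := by omega
      exact ⟨⟨hy0, hyr⟩, (lt_sub_two_mul_emod_iff hc0 hcr hy0 hyr).mpr (by omega)⟩
  rw [hunion, card_union_of_disjoint, card_union_of_disjoint, Int.card_Ioc, Int.card_Ioc,
    Int.card_Ioc, sub_zero]
  · simp only [Finset.disjoint_left, mem_Ioc]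
    omega
  · simp only [Finset.disjoint_left, mem_union, mem_Ioc]
    omega

theorem sub_one_ediv_three_sum_of_not_dvd {c r : ℤ} (h : ¬ (3 : ℤ) ∣ r) :
    (c - 1) / 3 + (c + r - 1) / 3 + (c + 2 * r - 1) / 3 = c + r - 2 := by
  have hr : r % 3 = 1 ∨ r % 3 = 2 := by omega
  have hc : c % 3 = 0 ∨ c % 3 = 1 ∨ c % 3 = 2 := by omega
  rcases hr with hr | hr <;> rcases hc with hc | hc | hc <;> omega

theorem Acount_eq_of_pos {r : ℕ} (hr : 0 < r) (h3 : ¬ 3 ∣ r) (ξ : ℤ) :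
    (Acount r ξ : ℤ) =
      ξ % r + r - 2 - ξ % r / 2 - (ξ % r + r) / 2 + if ξ % r = 0 then 1 else 0 := by
  have hc0 : 0 ≤ ξ % r := Int.emod_nonneg ξ (by omega)
  have hcr : ξ % r < r := Int.emod_lt_of_pos ξ (by omega)
  have hthirds := sub_one_ediv_three_sum_of_not_dvd (c := ξ % r) (r := r) (by exact_mod_cast h3)
  rw [Acount_eq_card_filter, card_filter_lt_sub_two_mul_emod hc0 hcr]
  generalize ξ % r = c at *
  split_ifs <;> omega

theorem Acount_eq_general (r : ℕ) (h3 : ¬ (3 ∣ r)) (ξ : ℤ) :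
    (Odd r →
      (¬ ((r : ℤ) ∣ ξ) → Acount r ξ = (r - 3) / 2) ∧
      (((r : ℤ) ∣ ξ) → Acount r ξ = (r - 1) / 2)) ∧
    (Even r →
      (¬ ((r : ℤ) ∣ ξ) → Odd ξ → Acount r ξ = r / 2 - 1) ∧
      (¬ ((r : ℤ) ∣ ξ) → Even ξ → Acount r ξ = r / 2 - 2) ∧
      (((r : ℤ) ∣ ξ) → Acount r ξ = r / 2 - 1)) := by
  rcases Nat.eq_zero_or_pos r with rfl | hr
  · simp [Acount_eq_card_filter]
  have hA := Acount_eq_of_pos hr h3 ξ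
  have hpar : Even r → ξ % r % 2 = ξ % 2 := fun h =>
    Int.emod_emod_of_dvd ξ (by exact_mod_cast h.two_dvd)
  simp only [Nat.odd_iff, Nat.even_iff, Int.odd_iff, Int.even_iff,
    Int.dvd_iff_emod_eq_zero] at hpar ⊢
  generalize ξ % r = c at *
  split_ifs at hA <;> omega

/-- The value of `A(r, ξ)` for `r` not divisible by `3`. -/
theorem Acount_eq (r : ℕ) (hr : 1 ≤ r) (h3 : ¬ (3 ∣ r)) (ξ : ℤ) :
    (Odd r →
      (¬ ((r : ℤ) ∣ ξ) → Acount r ξ = (r - 3) / 2) ∧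
      (((r : ℤ) ∣ ξ) → Acount r ξ = (r - 1) / 2)) ∧
    (Even r →
      (¬ ((r : ℤ) ∣ ξ) → Odd ξ → Acount r ξ = r / 2 - 1) ∧
      (¬ ((r : ℤ) ∣ ξ) → Even ξ → Acount r ξ = r / 2 - 2) ∧
      (((r : ℤ) ∣ ξ) → Acount r ξ = r / 2 - 1)) :=
  Acount_eq_general r h3 ξ
end

section
/- Let r, t, ω be positive integers with r not dividing ω. Then the number of triples (a,b,c) ∈ ℤ³ with a > 0, b > 0, c > 0, a + b + c = ωrt, and a + (1+rt)b + (1+3rt)c ≡ 0 (mod r²t) equals ωt·A(r,−ω) + C(ωt, 2)·r, where A(r,−ω) = #{(x,y) ∈ ℤ² : 0 < y < x < r and x + 2y ≡ −ω (mod r)} and C(ωt,2) is the binomial coefficient. -/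
namespace PositiveOctant

open Finset

lemma mem_Ico_and_modEq_iff {r : ℤ} (hr : 0 < r) {a c x : ℤ} :
    x ∈ Set.Ico a (a + r) ∧ x ≡ c [ZMOD r] ↔ x = toIcoMod hr a c := by
  rw [eq_comm, toIcoMod_eq_iff, Int.modEq_iff_add_fac]
  simp only [smul_eq_mul, mul_comm]

section

variable (r : ℕ) (k ξ : ℤ)

noncomputable def triangle (a b : ℤ) : Finset (ℤ × ℤ) :=
  {p ∈ Ico a b ×ˢ Ico a b | p.2 < p.1 ∧ p.1 + k * p.2 ≡ ξ [ZMOD r]}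

variable {r k ξ}

lemma mem_triangle {a b : ℤ} {p : ℤ × ℤ} :
    p ∈ triangle r k ξ a b ↔ a ≤ p.2 ∧ p.2 < p.1 ∧ p.1 < b ∧ p.1 + k * p.2 ≡ ξ [ZMOD r] := by
  simp only [triangle, mem_filter, mem_product, mem_Ico]
  grind

variable (r k ξ)

lemma natCard_eq_card_triangle (b : ℤ) :
    Nat.card {p : ℤ × ℤ // 0 < p.2 ∧ p.2 < p.1 ∧ p.1 < b ∧ p.1 + k * p.2 ≡ ξ [ZMOD r]} =
      #(triangle r k ξ 1 b) := by
  rw [← Nat.card_eq_finsetCard]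
  exact Nat.card_congr <| Equiv.subtypeEquivRight fun p => by
    rw [mem_triangle, Int.lt_iff_add_one_le, zero_add]

lemma card_triangle_split {a m b : ℤ} (ham : a ≤ m) (hmb : m ≤ b) :
    #(triangle r k ξ a b) = #(triangle r k ξ a m) +
      #{p ∈ Ico m b ×ˢ Ico a m | p.1 + k * p.2 ≡ ξ [ZMOD r]} + #(triangle r k ξ m b) := by
  rw [← card_union_of_disjoint, ← card_union_of_disjoint]
  · congr 1
    ext p
    simp only [mem_union, mem_triangle, mem_filter, mem_product, mem_Ico]
    grind
  · exact disjoint_left.2 fun p h₁ h₂ => by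
      simp only [mem_union, mem_triangle, mem_filter, mem_product, mem_Ico] at h₁ h₂
      omega
  · exact disjoint_left.2 fun p h₁ h₂ => by
      simp only [mem_triangle, mem_filter, mem_product, mem_Ico] at h₁ h₂
      omega

lemma card_filter_Ico_prod_modEq (hr : 0 < r) (a : ℤ) (J : Finset ℤ) :
    #{p ∈ Ico a (a + r) ×ˢ J | p.1 + k * p.2 ≡ ξ [ZMOD r]} = #J := by
  have hr' : (0 : ℤ) < r := Int.natCast_pos.2 hr
  have hcond : ∀ x y : ℤ, x + k * y ≡ ξ [ZMOD r] ↔ x ≡ ξ - k * y [ZMOD r] := fun x y =>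
    ⟨fun h => by simpa using h.sub_right (k * y), fun h => by simpa using h.add_right (k * y)⟩
  refine card_nbij' Prod.snd (fun y => (toIcoMod hr' a (ξ - k * y), y)) ?_ ?_ ?_ ?_
  · intro p hp
    simp only [coe_filter, mem_product, Set.mem_ofPred_eq] at hp
    exact hp.1.2
  · intro y hy
    have := (mem_Ico_and_modEq_iff hr').2 (rfl : toIcoMod hr' a (ξ - k * y) = _)
    simp only [coe_filter, mem_product, mem_Ico, Set.mem_ofPred_eq, hcond]
    exact ⟨⟨this.1, hy⟩, this.2⟩
  · intro p hp
    simp only [coe_filter, mem_product, mem_Ico, Set.mem_ofPred_eq, hcond] at hp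
    exact Prod.ext ((mem_Ico_and_modEq_iff hr').1 ⟨hp.1.1, hp.2⟩).symm rfl
  · intro y _
    rfl

lemma card_triangle_add_of_dvd {d : ℤ} (hd : (r : ℤ) ∣ d) (a b : ℤ) :
    #(triangle r k ξ (a + d) (b + d)) = #(triangle r k ξ a b) := by
  obtain ⟨e, rfl⟩ := hd
  have hshift : ∀ x y : ℤ, x + r * e + k * (y + r * e) ≡ ξ [ZMOD r] ↔ x + k * y ≡ ξ [ZMOD r] :=
    fun x y => by rw [show x + r * e + k * (y + r * e) = x + k * y + r * ((1 + k) * e) by ring,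
      Int.add_modulus_mul_modEq_iff]
  symm
  refine card_nbij' (· + (r * e, r * e)) (· - (r * e, r * e)) ?_ ?_ ?_ ?_
  · intro p hp
    simp only [mem_coe, mem_triangle, Prod.fst_add, Prod.snd_add, hshift] at hp ⊢
    exact ⟨by omega, by omega, by omega, hp.2.2.2⟩
  · intro p hp
    simp only [mem_coe, mem_triangle, Prod.fst_sub, Prod.snd_sub] at hp ⊢
    rw [← hshift, sub_add_cancel, sub_add_cancel]
    exact ⟨by omega, by omega, by omega, hp.2.2.2⟩
  · intro p _
    simp
  · intro p _
    simp

lemma card_triangle_zero_self (hr : 0 < r) (hξ : ¬ (r : ℤ) ∣ ξ) :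
    #(triangle r k ξ 0 r) = #(triangle r k ξ 1 r) + 1 := by
  have hr' : (0 : ℤ) < r := Int.natCast_pos.2 hr
  set x₀ := toIcoMod hr' 0 ξ
  have hx₀ := (mem_Ico_and_modEq_iff hr').2 (rfl : x₀ = _)
  rw [zero_add] at hx₀
  have hx₀_pos : 0 < x₀ := hx₀.1.1.lt_of_ne fun h => hξ (by simpa [← h] using hx₀.2.dvd)
  suffices triangle r k ξ 0 r = insert (x₀, 0) (triangle r k ξ 1 r) by
    rw [this, card_insert_of_notMem (by simp [mem_triangle])]
  ext ⟨x, y⟩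
  simp only [mem_insert, mem_triangle, Prod.mk.injEq]
  constructor
  · rintro ⟨hy, hyx, hxr, hmod⟩
    rcases hy.eq_or_lt with rfl | hy
    · left
      rw [mul_zero, add_zero] at hmod
      exact ⟨(mem_Ico_and_modEq_iff hr').1 ⟨⟨hyx.le, by rwa [zero_add]⟩, hmod⟩, rfl⟩
    · exact .inr ⟨hy, hyx, hxr, hmod⟩
  · rintro (⟨rfl, rfl⟩ | ⟨hy, hyx, hxr, hmod⟩)
    · exact ⟨le_rfl, hx₀_pos, hx₀.1.2, by simpa using hx₀.2⟩
    · exact ⟨by omega, hyx, hxr, hmod⟩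

lemma card_triangle_succ_mul (hr : 0 < r) (hξ : ¬ (r : ℤ) ∣ ξ) {m : ℕ} (hm : 1 ≤ m) :
    #(triangle r k ξ 1 ((m + 1 : ℕ) * r)) =
      #(triangle r k ξ 1 (m * r)) + m * r + #(triangle r k ξ 1 r) := by
  have hmr : 1 ≤ m * r := Nat.one_le_iff_ne_zero.2 (by positivity)
  have hsucc : ((m + 1 : ℕ) * r : ℤ) = m * r + r := by push_cast; ring
  have hrect : #{p ∈ Ico (m * r : ℤ) ((m + 1 : ℕ) * r) ×ˢ Ico 1 (m * r : ℤ) |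
      p.1 + k * p.2 ≡ ξ [ZMOD r]} = m * r - 1 := by
    rw [hsucc, card_filter_Ico_prod_modEq r k ξ hr, Int.card_Ico, ← Nat.cast_mul]
    omega
  have hdiag : #(triangle r k ξ (m * r) ((m + 1 : ℕ) * r)) = #(triangle r k ξ 1 r) + 1 := by
    rw [← card_triangle_zero_self r k ξ hr hξ,
      ← card_triangle_add_of_dvd r k ξ (dvd_mul_left (r : ℤ) m) 0 r, zero_add, hsucc,
      add_comm (r : ℤ)]
  rw [card_triangle_split r k ξ (m := m * r) (by exact_mod_cast hmr) (by rw [hsucc]; omega), hrect,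
    hdiag]
  omega

theorem card_triangle_one_mul (hr : 0 < r) (hξ : ¬ (r : ℤ) ∣ ξ) (m : ℕ) :
    #(triangle r k ξ 1 (m * r)) = m * #(triangle r k ξ 1 r) + m.choose 2 * r := by
  induction m with
  | zero => simp [triangle]
  | succ m ih =>
    rcases Nat.eq_zero_or_pos m with rfl | hm
    · simp
    · rw [card_triangle_succ_mul r k ξ hr hξ hm, ih, Nat.choose_succ_succ' m 1,
        Nat.choose_one_right]
      ring

end

def positiveCompositionEquiv (M : ℤ) (P : ℤ × ℤ → Prop) :
    {v : ℤ × ℤ × ℤ // 0 < v.1 ∧ 0 < v.2.1 ∧ 0 < v.2.2 ∧ v.1 + v.2.1 + v.2.2 = M ∧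
        P (v.2.1 + v.2.2, v.2.2)} ≃
      {p : ℤ × ℤ // 0 < p.2 ∧ p.2 < p.1 ∧ p.1 < M ∧ P p} where
  toFun v := ⟨(v.1.2.1 + v.1.2.2, v.1.2.2), by
    obtain ⟨ha, hb, hc, hsum, hP⟩ := v.2
    exact ⟨hc, by omega, by omega, hP⟩⟩
  invFun p := ⟨(M - p.1.1, p.1.1 - p.1.2, p.1.2), by
    obtain ⟨hy, hyx, hxM, hP⟩ := p.2
    exact ⟨by omega, show 0 < p.1.1 - p.1.2 by omega, hy, by ring, by simpa using hP⟩⟩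
  left_inv v :=
    Subtype.ext <| Prod.ext (by dsimp only; linarith [v.2.2.2.2.1]) (Prod.ext (by simp) rfl)
  right_inv p := Subtype.ext <| Prod.ext (by simp) rfl

lemma dvd_iff_modEq_of_add_eq {r t ω a b c : ℤ} (hrt : r * t ≠ 0) (hsum : a + b + c = ω * r * t) :
    r ^ 2 * t ∣ a + (1 + r * t) * b + (1 + 3 * r * t) * c ↔ (b + c) + 2 * c ≡ -ω [ZMOD r] := by
  rw [show a + (1 + r * t) * b + (1 + 3 * r * t) * c = r * t * ((b + c) + 2 * c + ω) by
      linear_combination hsum,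
    show r ^ 2 * t = r * t * r by ring, mul_dvd_mul_iff_left hrt, Int.modEq_comm,
    Int.modEq_iff_dvd, sub_neg_eq_add]

end PositiveOctant

theorem count_positive_octant_general (r t ω : ℕ) (hr : 1 ≤ r) (ht : 1 ≤ t)
    (hrω : ¬ (r ∣ ω)) :
    Nat.card {v : ℤ × ℤ × ℤ // 0 < v.1 ∧ 0 < v.2.1 ∧ 0 < v.2.2 ∧
        v.1 + v.2.1 + v.2.2 = (ω : ℤ) * r * t ∧
        ((r : ℤ) ^ 2 * t) ∣
          v.1 + (1 + (r : ℤ) * t) * v.2.1 + (1 + 3 * (r : ℤ) * t) * v.2.2}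
      = ω * t * Acount r (-(ω : ℤ)) + (ω * t).choose 2 * r := by
  open PositiveOctant in
  have hrt : (r : ℤ) * t ≠ 0 := by positivity
  have hξ : ¬ (r : ℤ) ∣ -ω := by rwa [dvd_neg, Int.natCast_dvd_natCast]
  have hM : (ω : ℤ) * r * t = (ω * t : ℕ) * r := by push_cast; ring
  rw [Nat.card_congr <| (Equiv.subtypeEquivRight fun _ =>
        and_congr_right' <| and_congr_right' <| and_congr_right' <|
          and_congr_right fun hsum => dvd_iff_modEq_of_add_eq hrt hsum).trans <|
      positiveCompositionEquiv _ fun p => p.1 + 2 * p.2 ≡ -ω [ZMOD r]]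
  rw [natCard_eq_card_triangle, hM, card_triangle_one_mul r 2 _ hr hξ, Acount,
    natCard_eq_card_triangle]

/-- The number of lattice points of `𝓛(r²t; 1, 1+rt, 1+3rt)` of one-norm `ωrt` in the
open positive octant equals `ωt·A(r,−ω) + C(ωt,2)·r`, when `r ∤ ω`. -/
theorem count_positive_octant (r t ω : ℕ) (hr : 1 ≤ r) (ht : 1 ≤ t) (hω : 1 ≤ ω)
    (hrω : ¬ (r ∣ ω)) :
    Nat.card {v : ℤ × ℤ × ℤ // 0 < v.1 ∧ 0 < v.2.1 ∧ 0 < v.2.2 ∧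
        v.1 + v.2.1 + v.2.2 = (ω : ℤ) * r * t ∧
        ((r : ℤ) ^ 2 * t) ∣
          v.1 + (1 + (r : ℤ) * t) * v.2.1 + (1 + 3 * (r : ℤ) * t) * v.2.2}
      = ω * t * Acount r (-(ω : ℤ)) + (ω * t).choose 2 * r :=
  count_positive_octant_general r t ω hr ht hrω
end

section
/- Let m ≥ 3, let r ≥ m+3 and t ≥ 1 be integers, and set q = r²t. Then the congruence lattices 𝓛(q; 1, 1+2rt, 1+3rt, …, 1+mrt) and 𝓛(q; 1, 1−2rt, 1−3rt, …, 1−mrt) in ℤ^m (with parameter tuples (1+krt)_{k∈{0,2,3,…,m}} and (1−krt)_{k∈{0,2,3,…,m}}) are not ‖·‖₁-isometric. -/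
/-!
An `ℓ¹`-isometry of `ℝ^m` maps vectors with disjoint supports to vectors with disjoint supports
(these are exactly the pairs with `‖x + y‖₁ + ‖x - y‖₁ = 2‖x‖₁ + 2‖y‖₁`), so it is a signed
permutation `e_k ↦ ε_k e_{σ k}`, and it would carry `𝓛(q; s)` into `𝓛(q; (ε_k s'_{σ k})_k)`.
Write `s_j = 1 + K_j rt` and `s'_j = 1 - K_j rt` with `K_j ∈ {0, 2, 3, …, m}`. Testing on
`e_j - s_j e_0 ∈ 𝓛(q; s)` modulo `rt` forces `ε_j = ε_0`, and then modulo `r²t` gives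
`K_{σ 0} ≡ K_j + K_{σ j} (mod r)`. For `j` adjacent to `σ 0` the difference
`K_{σ 0} - K_j - K_{σ j}` is nonzero of absolute value at most `m + 2 < r`, a contradiction.
-/

open Finset

theorem exists_intUnit_cast_eq_of_abs_eq_one {v : ℝ} (hv : |v| = 1) :
    ∃ u : ℤˣ, ((u : ℤ) : ℝ) = v := by
  rcases (abs_eq zero_le_one).mp hv with rfl | rfl
  · exact ⟨1, by simp⟩
  · exact ⟨-1, by simp⟩

theorem abs_add_add_abs_sub_le (a b : ℝ) : |a + b| + |a - b| ≤ 2 * |a| + 2 * |b| := by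
  linarith [abs_add_le a b, abs_sub a b]

theorem abs_add_add_abs_sub_lt {a b : ℝ} (ha : a ≠ 0) (hb : b ≠ 0) :
    |a + b| + |a - b| < 2 * |a| + 2 * |b| := by
  have := abs_pos.mpr ha
  have := abs_pos.mpr hb
  rcases abs_cases a with ⟨_, _⟩ | ⟨_, _⟩ <;> rcases abs_cases b with ⟨_, _⟩ | ⟨_, _⟩ <;>
    rcases abs_cases (a + b) with ⟨_, _⟩ | ⟨_, _⟩ <;>
    rcases abs_cases (a - b) with ⟨_, _⟩ | ⟨_, _⟩ <;> linarith

section OneNorm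

variable {ι : Type*} [Fintype ι]

theorem sum_abs_add_add_sum_abs_sub {x y : ι → ℝ} (hxy : ∀ k, x k = 0 ∨ y k = 0) :
    ∑ k, |x k + y k| + ∑ k, |x k - y k| = 2 * ∑ k, |x k| + 2 * ∑ k, |y k| := by
  simp only [← sum_add_distrib, mul_sum]
  refine sum_congr rfl fun k _ => ?_
  rcases hxy k with h | h <;> simp only [h, zero_add, zero_sub, add_zero, sub_zero, abs_neg,
    abs_zero, mul_zero] <;> ring

theorem map_apply_eq_zero_or_of_sum_abs_map {T : (ι → ℝ) →ₗ[ℝ] (ι → ℝ)}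
    (hT : ∀ x, ∑ k, |T x k| = ∑ k, |x k|) {x y : ι → ℝ} (hxy : ∀ k, x k = 0 ∨ y k = 0) (k : ι) :
    T x k = 0 ∨ T y k = 0 := by
  by_contra! h
  have hlt : ∑ k, (|T x k + T y k| + |T x k - T y k|) < ∑ k, (2 * |T x k| + 2 * |T y k|) :=
    sum_lt_sum (fun k _ => abs_add_add_abs_sub_le _ _)
      ⟨k, mem_univ k, abs_add_add_abs_sub_lt h.1 h.2⟩
  have hadd := hT (x + y)
  have hsub := hT (x - y)
  simp only [map_add, map_sub, Pi.add_apply, Pi.sub_apply] at hadd hsub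
  rw [sum_add_distrib, sum_add_distrib, ← mul_sum, ← mul_sum, hadd, hsub, hT, hT,
    sum_abs_add_add_sum_abs_sub hxy] at hlt
  exact lt_irrefl _ hlt

theorem sum_abs_single_one [DecidableEq ι] (i : ι) :
    ∑ k, |(Pi.single i (1 : ℝ) : ι → ℝ) k| = 1 := by
  rw [sum_eq_single i (fun k _ hk => by simp [hk]) (by simp)]
  simp

theorem exists_perm_units_of_sum_abs_map {T : (ι → ℝ) →ₗ[ℝ] (ι → ℝ)}
    (hT : ∀ x, ∑ k, |T x k| = ∑ k, |x k|) :
    ∃ (σ : Equiv.Perm ι) (ε : ι → ℤˣ), ∀ x k, T x (σ k) = (ε k : ℤ) * x k := by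
  classical
  have hdisj : ∀ i i', i ≠ i' → ∀ k, T (Pi.single i 1) k = 0 ∨ T (Pi.single i' 1) k = 0 :=
    fun i i' hne => map_apply_eq_zero_or_of_sum_abs_map hT fun k => by
      by_cases hk : k = i <;> simp [Pi.single_apply, hk, Ne.symm hne]
  have hsupp : ∀ i, ∃ k, T (Pi.single i 1) k ≠ 0 := by
    intro i
    by_contra! h
    simpa [h, sum_abs_single_one] using hT (Pi.single i 1)
  choose τ hτ using hsupp
  have hτinj : Function.Injective τ := fun i i' h => by
    by_contra hne
    rcases hdisj i i' hne (τ i) with h0 | h0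
    · exact hτ i h0
    · exact hτ i' (h ▸ h0)
  set σ := Equiv.ofBijective τ (Finite.injective_iff_bijective.mp hτinj)
  have hzero : ∀ i k, k ≠ i → T (Pi.single i 1) (σ k) = 0 := fun i k hk =>
    (hdisj i k hk.symm (σ k)).resolve_right (hτ k)
  have habs : ∀ i, |T (Pi.single i 1) (σ i)| = 1 := by
    intro i
    have h := hT (Pi.single i 1)
    rwa [sum_abs_single_one, ← σ.sum_comp, sum_eq_single i
      (fun k _ hk => by rw [hzero i k hk, abs_zero]) (by simp)] at h
  choose ε hε using fun i => exists_intUnit_cast_eq_of_abs_eq_one (habs i)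
  refine ⟨σ, ε, fun x k => ?_⟩
  have hx : ∀ i, Pi.single i (x i) = x i • Pi.single i (1 : ℝ) := fun i => by
    rw [← Pi.single_smul', smul_eq_mul, mul_one]
  conv_lhs => rw [← univ_sum_single x]
  simp only [hx, map_sum, map_smul, Finset.sum_apply, Pi.smul_apply, smul_eq_mul]
  rw [sum_eq_single k (fun i _ hi => by rw [hzero i k hi.symm, mul_zero]) (by simp), hε,
    mul_comm]

end OneNorm

theorem OneNormIsometric.exists_perm_units {m : ℕ} {L L' : Set (Fin m → ℤ)}
    (h : OneNormIsometric L L') :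
    ∃ (σ : Equiv.Perm (Fin m)) (ε : Fin m → ℤˣ),
      ∀ a ∈ L, ∃ b ∈ L', ∀ k, b (σ k) = ε k * a k := by
  obtain ⟨T, hT, himg⟩ := h
  obtain ⟨σ, ε, hσε⟩ := exists_perm_units_of_sum_abs_map (T := T.toLinearMap) hT
  refine ⟨σ, ε, fun a ha => ?_⟩
  obtain ⟨b, hb, hba⟩ : T (fun j => (a j : ℝ)) ∈ intCastImg L' := himg ▸ ⟨_, ⟨a, ha, rfl⟩, rfl⟩
  refine ⟨b, hb, fun k => ?_⟩
  have := hσε (fun j => (a j : ℝ)) k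
  rw [LinearEquiv.coe_coe, ← hba] at this
  simp only at this
  exact_mod_cast this

theorem congLat_subset_of_oneNormIsometric {q m : ℕ} {s s' : Fin m → ℤ}
    (h : OneNormIsometric (congLat q m s) (congLat q m s')) :
    ∃ (σ : Equiv.Perm (Fin m)) (ε : Fin m → ℤˣ),
      congLat q m s ⊆ congLat q m fun k => ε k * s' (σ k) := by
  obtain ⟨σ, ε, hσε⟩ := h.exists_perm_units
  refine ⟨σ, ε, fun a ha => ?_⟩
  obtain ⟨b, hb, hba⟩ := hσε a ha
  have hsum : ∑ k, a k * (ε k * s' (σ k)) = ∑ k, b k * s' k := by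
    rw [← Equiv.sum_comp σ (fun k => b k * s' k)]
    exact sum_congr rfl fun k _ => by rw [hba]; ring
  change (q : ℤ) ∣ _
  rw [hsum]
  exact hb

theorem dvd_sub_mul_of_congLat_subset {q m : ℕ} {s u : Fin m → ℤ} {i₀ : Fin m} (hs : s i₀ = 1)
    (h : congLat q m s ⊆ congLat q m u) (j : Fin m) : (q : ℤ) ∣ u j - s j * u i₀ := by
  have hmem : Pi.single j 1 - Pi.single i₀ (s j) ∈ congLat q m s := by
    change (q : ℤ) ∣ (Pi.single j 1 - Pi.single i₀ (s j)) ⬝ᵥ s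
    simp [sub_dotProduct, single_dotProduct, hs]
  have := h hmem
  change (q : ℤ) ∣ (Pi.single j 1 - Pi.single i₀ (s j)) ⬝ᵥ u at this
  simpa [sub_dotProduct, single_dotProduct] using this

theorem Int.units_eq_of_dvd_sub {n : ℤ} (hn : 2 < n) {u v : ℤˣ} (h : n ∣ (u : ℤ) - v) : u = v := by
  rcases Int.units_eq_one_or u with rfl | rfl <;> rcases Int.units_eq_one_or v with rfl | rfl <;>
    norm_num at h ⊢ <;> exact absurd (Int.le_of_dvd two_pos h) (by omega)

theorem dvd_sub_sub_of_dvd_units_mul_sub {r t A B C : ℤ} (u v : ℤˣ) (hrt : 2 < r * t)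
    (h : r ^ 2 * t ∣ u * (1 - C * r * t) - (1 + B * r * t) * (v * (1 - A * r * t))) :
    r ∣ A - B - C := by
  -- modulo `rt` the hypothesis reads `u ≡ v`
  have huv : u = v := by
    refine Int.units_eq_of_dvd_sub hrt ((dvd_add_left (dvd_mul_right (r * t)
      (-u * C - v * B + v * A + v * A * B * r * t))).mp ?_)
    exact (Dvd.intro r (by ring)).trans (h.trans (dvd_of_eq (by ring)))
  subst huv
  have h' : r ^ 2 * t ∣ u * ((A - B - C) * (r * t)) + r ^ 2 * t * (u * A * B * t) := by
    convert h using 1; ring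
  rw [dvd_add_left (dvd_mul_right _ _), Units.dvd_mul_left,
    show r ^ 2 * t = r * (r * t) by ring, mul_dvd_mul_iff_right (by omega)] at h'
  exact h'

/-- `paramIndex j` is the `j`-th element of `0, 2, 3, 4, …`: the parameters of the theorem are
`1 ± paramIndex j * r * t`. -/
def paramIndex (n : ℕ) : ℤ := if n = 0 then 0 else n + 1

theorem exists_not_dvd_paramIndex {m r : ℕ} [NeZero m] (hm : 3 ≤ m) (hr : m + 3 ≤ r)
    (σ : Equiv.Perm (Fin m)) :
    ∃ j : Fin m, ¬ (r : ℤ) ∣ paramIndex (σ 0) - paramIndex j - paramIndex (σ j) := by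
  have hP : ∀ k : Fin m, paramIndex k = 0 ∧ (k : ℕ) = 0 ∨ paramIndex k = k + 1 ∧ (k : ℕ) ≠ 0 := by
    intro k; unfold paramIndex; split_ifs with hk <;> simp [hk]
  have hlt : ∀ k : Fin m, (k : ℕ) < m := Fin.isLt
  have not_dvd : ∀ d : ℤ, d ≠ 0 → -r < d → d < r → ¬ (r : ℤ) ∣ d := fun d hd h₁ h₂ hdvd =>
    hd (Int.eq_zero_of_abs_lt_dvd hdvd (abs_lt.mpr ⟨h₁, h₂⟩))
  have h0 := hP (σ 0)
  rcases Nat.lt_or_ge (σ 0) 2 with hσ0 | hσ0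
  · obtain ⟨j, hj⟩ : ∃ j : Fin m, (j : ℕ) = σ 0 + 1 := ⟨⟨_, by omega⟩, rfl⟩
    have hσj : (σ j : ℕ) ≠ σ 0 := fun h => by
      have := congrArg Fin.val (σ.injective (Fin.ext h))
      rw [Fin.val_zero] at this
      omega
    refine ⟨j, not_dvd _ ?_ ?_ ?_⟩ <;> rcases hP j with hj' | hj' <;>
      rcases hP (σ j) with hk | hk <;> have := hlt (σ j) <;> omega
  · obtain ⟨j, hj⟩ : ∃ j : Fin m, (j : ℕ) = σ 0 - 1 := ⟨⟨_, by omega⟩, rfl⟩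
    refine ⟨j, not_dvd _ ?_ ?_ ?_⟩ <;> rcases hP j with hj' | hj' <;>
      rcases hP (σ j) with hk | hk <;> have := hlt (σ j) <;> omega

/-- For `m ≥ 3` and `r ≥ m + 3`, the congruence lattices
`𝓛(r²t; 1, 1+2rt, 1+3rt, …, 1+mrt)` and `𝓛(r²t; 1, 1-2rt, 1-3rt, …, 1-mrt)` are
not `‖·‖₁`-isometric. -/
theorem congLat_powers_not_isometric (m r t : ℕ) (hm : 3 ≤ m) (hr : m + 3 ≤ r)
    (ht : 1 ≤ t) :
    ¬ OneNormIsometric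
        (congLat (r ^ 2 * t) m
          (fun j => 1 + (if (j : ℕ) = 0 then 0 else ((j : ℕ) : ℤ) + 1) * r * t))
        (congLat (r ^ 2 * t) m
          (fun j => 1 - (if (j : ℕ) = 0 then 0 else ((j : ℕ) : ℤ) + 1) * r * t)) := by
  change ¬ OneNormIsometric (congLat _ m fun j => 1 + paramIndex j * r * t)
    (congLat _ m fun j => 1 - paramIndex j * r * t)
  intro hiso
  have : NeZero m := ⟨by omega⟩
  obtain ⟨σ, ε, hsub⟩ := congLat_subset_of_oneNormIsometric hiso
  obtain ⟨j, hj⟩ := exists_not_dvd_paramIndex hm hr σ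
  have hdvd := dvd_sub_mul_of_congLat_subset (i₀ := 0) (by simp [paramIndex]) hsub j
  push_cast at hdvd
  exact hj (dvd_sub_sub_of_dvd_units_mul_sub (ε j) (ε 0) (by nlinarith) hdvd)
end

section
/- Let r and t be positive integers with r not divisible by 3. Then there exists an integer d such that d³ ≡ 1 + rt (mod r²t); that is, 1 + rt is a cube in the ring ℤ/r²tℤ. -/
/-! If `3k ≡ 1 (mod r)`, then `d = 1 + krt` works: expanding, `d³ ≡ 1 + 3krt (mod r²t)`, and
`3krt ≡ rt (mod r²t)` because `r ∣ 3k - 1`. Such a `k` exists since `3` is invertible modulo `r`. -/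

theorem Int.exists_dvd_three_mul_sub_one {r : ℤ} (h3 : ¬ (3 : ℤ) ∣ r) : ∃ k : ℤ, r ∣ 3 * k - 1 := by
  obtain ⟨u, v, huv⟩ := (Int.prime_three.coprime_iff_not_dvd).mpr h3
  exact ⟨u, ⟨-v, by linear_combination huv⟩⟩

theorem Int.one_add_mul_mul_pow_three_modEq {r t k : ℤ} (hk : r ∣ 3 * k - 1) :
    (1 + k * r * t) ^ 3 ≡ 1 + r * t [ZMOD r ^ 2 * t] := by
  obtain ⟨m, hm⟩ := hk
  refine (Int.modEq_iff_dvd.mpr ⟨m + 3 * k ^ 2 * t + k ^ 3 * r * t ^ 2, ?_⟩).symm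
  linear_combination (r * t) * hm

theorem one_add_rt_is_cube_general (r t : ℕ) (h3 : ¬ (3 ∣ r)) :
    ∃ d : ℤ, d ^ 3 ≡ 1 + (r : ℤ) * t [ZMOD ((r : ℤ) ^ 2 * t)] := by
  obtain ⟨k, hk⟩ := Int.exists_dvd_three_mul_sub_one (r := r) (by exact_mod_cast h3)
  exact ⟨_, Int.one_add_mul_mul_pow_three_modEq hk⟩

/-- For `r` not divisible by `3`, `1 + rt` is a cube modulo `r²t`. -/
theorem one_add_rt_is_cube (r t : ℕ) (hr : 1 ≤ r) (ht : 1 ≤ t) (h3 : ¬ (3 ∣ r)) :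
    ∃ d : ℤ, d ^ 3 ≡ 1 + (r : ℤ) * t [ZMOD ((r : ℤ) ^ 2 * t)] :=
  one_add_rt_is_cube_general r t h3
end
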